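/- arXiv:1306.3777 — 7 statements merged into one kernel-verified Lean document; each statement's English description precedes it below -/
import Mathlib

section
/- Let $X$ be a uniformly recurrent subshift and $Y$ a subshift, and let $f, g : X \to Y$ be block maps that are almost equivalent, i.e., for every $x \in X$ there exist $i, j \in \mathbb{N}$ with $\sigma^i(f(x)) = \sigma^j(g(x))$. Then there exists $k \in \mathbb{N}$ such that $g \circ \sigma^k = f$ or $g = f \circ \sigma^k$. -/
open Filter Topology

section Defs

variable {A : Type*} {B : Type*} {C : Type*}

/-- The one-sided shift map. -/
def shift (x : ℕ → A) : ℕ → A := fun n => x (n + 1)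

/-- A (one-sided) subshift: a closed, shift-invariant set of configurations. -/
def Subshift [TopologicalSpace A] (X : Set (ℕ → A)) : Prop :=
  IsClosed X ∧ ∀ x ∈ X, shift x ∈ X

/-- `X` is uniformly recurrent: every pattern occurring in `X` occurs in every
sufficiently long window of every point of `X`. -/
def UniformlyRecurrent (X : Set (ℕ → A)) : Prop :=
  ∀ x ∈ X, ∀ l : ℕ, ∃ N : ℕ, ∀ y ∈ X, ∃ i < N, ∀ k < l, y (i + k) = x k

/-- A block map: a continuous shift-commuting map. -/
def BlockMap [TopologicalSpace A] [TopologicalSpace B] (X : Set (ℕ → A)) (Y : Set (ℕ → B))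
    (f : (ℕ → A) → (ℕ → B)) : Prop :=
  Set.MapsTo f X Y ∧ ContinuousOn f X ∧ ∀ x ∈ X, f (shift x) = shift (f x)

/-- `s` is a cocycle for `Φ` on `X`: `Φ (σ x) = σ^(s x) (Φ x)`. -/
def IsCocycle (X : Set (ℕ → A)) (Φ : (ℕ → A) → (ℕ → B)) (s : (ℕ → A) → ℕ) : Prop :=
  ∀ x ∈ X, ∀ n : ℕ, Φ (shift x) n = Φ x (n + s x)

/-- A dill map: a continuous map with a continuous cocycle which is nontrivial
along every orbit. -/
def DillMap [TopologicalSpace A] [TopologicalSpace B] (X : Set (ℕ → A)) (Y : Set (ℕ → B))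
    (Φ : (ℕ → A) → (ℕ → B)) : Prop :=
  Set.MapsTo Φ X Y ∧ ContinuousOn Φ X ∧
    ∃ s : (ℕ → A) → ℕ, ContinuousOn s X ∧ IsCocycle X Φ s ∧
      ∀ x ∈ X, ∃ n : ℕ, 0 < s (shift^[n] x)

/-- Continuity (local constancy) of a word-valued function on `X`. -/
def WordContinuousOn (φ : (ℕ → A) → List B) (X : Set (ℕ → A)) : Prop :=
  ∀ x ∈ X, ∃ R : ℕ, ∀ y ∈ X, (∀ k ≤ R, y k = x k) → φ y = φ x

/-- `φ` is an implementation of `Φ` on `X`: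
`Φ x = φ x ++ φ (σ x) ++ φ (σ² x) ++ ⋯`, expressed coordinatewise. -/
def IsImplementation (X : Set (ℕ → A)) (Φ : (ℕ → A) → (ℕ → B))
    (φ : (ℕ → A) → List B) : Prop :=
  WordContinuousOn φ X ∧ ∀ x ∈ X, ∀ n : ℕ,
    Φ x n = if h : n < (φ x).length then (φ x).get ⟨n, h⟩
            else Φ (shift x) (n - (φ x).length)

/-- `ⁿφ(x) = φ(x) φ(σ x) ⋯ φ(σ^(n-1) x)`. -/
def iterWord (φ : (ℕ → A) → List B) (x : ℕ → A) : ℕ → List B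
  | 0 => []
  | n + 1 => iterWord φ x n ++ φ (shift^[n] x)

/-- The invariant `Z`: `|ⁿφ(x)|/n → lam` for every `x ∈ X`. -/
def HasZ (X : Set (ℕ → A)) (φ : (ℕ → A) → List B) (lam : ℝ) : Prop :=
  ∀ x ∈ X, Tendsto (fun n : ℕ => ((iterWord φ x n).length : ℝ) / n) atTop (𝓝 lam)

/-- `D` is a deviation bound: `| |ⁿφ(x)| - lam·n | ≤ D` for all `x ∈ X`, `n`. -/
def HasDBound (X : Set (ℕ → A)) (φ : (ℕ → A) → List B) (lam D : ℝ) : Prop :=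
  ∀ x ∈ X, ∀ n : ℕ, |((iterWord φ x n).length : ℝ) - lam * n| ≤ D

/-- `R` is an in-radius bound for `φ` on `X`: `φ x` only depends on `x_[0,R]`. -/
def HasInRadius (X : Set (ℕ → A)) (φ : (ℕ → A) → List B) (R : ℕ) : Prop :=
  ∀ x ∈ X, ∀ y ∈ X, (∀ k ≤ R, x k = y k) → φ x = φ y

/-- Almost equivalence: images of every point agree up to shifts. -/
def AlmostEquiv (X : Set (ℕ → A)) (Φ Ψ : (ℕ → A) → (ℕ → B)) : Prop :=
  ∀ x ∈ X, ∃ i j : ℕ, shift^[i] (Φ x) = shift^[j] (Ψ x)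

/-- The implementation of the composition of two dill maps. -/
def compImpl (φ₁ : (ℕ → A) → List B) (Φ₁ : (ℕ → A) → (ℕ → B))
    (φ₂ : (ℕ → B) → List C) (x : ℕ → A) : List C :=
  iterWord φ₂ (Φ₁ x) (φ₁ x).length

/-- Extension of a substitution to words. -/
def wordApply (τ : A → List A) (w : List A) : List A := (w.map τ).flatten

/-- Iterated image `τⁿ(a)` of a letter. -/
def subPow (τ : A → List A) : ℕ → A → List A
  | 0, a => [a]
  | n + 1, a => wordApply τ (subPow τ n a)

/-- The language of the substitution `τ`: infixes of the `τⁿ(a)`. -/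
def InLanguage (τ : A → List A) (w : List A) : Prop :=
  ∃ a n, w <:+: subPow τ n a

/-- The one-sided subshift of the substitution `τ`. -/
def Xsub (τ : A → List A) : Set (ℕ → A) :=
  {x | ∀ i l : ℕ, InLanguage τ (List.ofFn fun k : Fin l => x (i + k))}

/-- Primitivity of a substitution. -/
def Primitive (τ : A → List A) : Prop :=
  ∃ N, ∀ n ≥ N, ∀ a b : A, a ∈ subPow τ n b

/-- The word `w` occurs in `x` at position `i`. -/
def occursAt (w : List A) (x : ℕ → A) (i : ℕ) : Prop :=
  w = List.ofFn fun k : Fin w.length => x (i + k)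

/-- The action of a (non-erasing) substitution on one-sided configurations. -/
def subApply [Inhabited A] (τ : A → List A) (x : ℕ → A) : ℕ → A :=
  fun n => (wordApply τ (List.ofFn fun k : Fin (n + 1) => x k)).getD n default

end Defs

section Aux

variable {A : Type*} {B : Type*}

lemma shift_iter_apply (x : ℕ → A) (i k : ℕ) : shift^[i] x k = x (i + k) := by
  induction i generalizing x k with
  | zero => simp
  | succ n ih =>
    rw [Function.iterate_succ_apply, ih]
    show x (n + k + 1) = x (n + 1 + k)
    congr 1; omega

lemma mem_iter {X : Set (ℕ → A)} (hinv : ∀ x ∈ X, shift x ∈ X) {y : ℕ → A}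
    (hy : y ∈ X) (i : ℕ) : shift^[i] y ∈ X := by
  induction i with
  | zero => simpa
  | succ n ih => rw [Function.iterate_succ_apply']; exact hinv _ ih

lemma blockmap_iter [TopologicalSpace A] [TopologicalSpace B]
    {X : Set (ℕ → A)} {Y : Set (ℕ → B)} (hX : Subshift X)
    {f : (ℕ → A) → (ℕ → B)} (hf : BlockMap X Y f) {x : ℕ → A} (hx : x ∈ X) (i : ℕ) :
    f (shift^[i] x) = shift^[i] (f x) := by
  induction i with
  | zero => simp
  | succ n ih =>
    rw [Function.iterate_succ_apply', Function.iterate_succ_apply',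
      hf.2.2 _ (mem_iter hX.2 hx n), ih]

lemma continuous_shift [TopologicalSpace A] : Continuous (shift : (ℕ → A) → (ℕ → A)) := by
  exact continuous_pi fun n => continuous_apply (n + 1)

/-- Key lemma: if `f x = g (σ^k x)` at one point of a uniformly recurrent
subshift, it holds everywhere. -/
lemma key_lemma {A B : Type*}
    [TopologicalSpace A] [DiscreteTopology A] [TopologicalSpace B] [DiscreteTopology B]
    {X : Set (ℕ → A)} {Y : Set (ℕ → B)} (hX : Subshift X)
    (hUR : UniformlyRecurrent X)
    {f g : (ℕ → A) → (ℕ → B)} (hf : BlockMap X Y f) (hg : BlockMap X Y g)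
    {k : ℕ} {y : ℕ → A} (hy : y ∈ X) (hfy : f y = g (shift^[k] y)) :
    ∀ x ∈ X, f x = g (shift^[k] x) := by
  have hky : shift^[k] y ∈ X := mem_iter hX.2 hy k
  -- the equation holds on the whole forward orbit of y
  have horb : ∀ i : ℕ, f (shift^[i] y) = g (shift^[k] (shift^[i] y)) := by
    intro i
    have h1 : shift^[k] (shift^[i] y) = shift^[i] (shift^[k] y) := by
      rw [← Function.iterate_add_apply, ← Function.iterate_add_apply, add_comm]
    rw [h1, blockmap_iter hX hf hy i, hfy, blockmap_iter hX hg hky i]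
  intro x hx
  -- build a sequence of orbit points of y converging to x
  have hz : ∀ l : ℕ, ∃ z, z ∈ X ∧ (∀ m < l, z m = x m) ∧ f z = g (shift^[k] z) := by
    intro l
    obtain ⟨N, hN⟩ := hUR x hx l
    obtain ⟨i, _, hi⟩ := hN y hy
    refine ⟨shift^[i] y, mem_iter hX.2 hy i, fun m hm => ?_, horb i⟩
    rw [shift_iter_apply]; exact hi m hm
  choose z hzX hzx hzf using hz
  have htend : Tendsto z atTop (𝓝[X] x) := by
    rw [tendsto_nhdsWithin_iff]
    constructor
    · rw [tendsto_pi_nhds]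
      intro m
      refine Tendsto.congr' ?_ (tendsto_const_nhds (x := x m))
      filter_upwards [eventually_ge_atTop (m + 1)] with l hl
      exact (hzx l m (by omega)).symm
    · exact Eventually.of_forall hzX
  funext n
  have hcf : ContinuousWithinAt (fun w => f w n) X x :=
    (((continuous_apply n).comp_continuousOn hf.2.1).continuousWithinAt hx)
  have hmap : Set.MapsTo (shift^[k] : (ℕ → A) → (ℕ → A)) X X :=
    fun w hw => mem_iter hX.2 hw k
  have hcg : ContinuousWithinAt (fun w => g (shift^[k] w) n) X x := by
    have : ContinuousOn (fun w => g (shift^[k] w) n) X :=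
      (continuous_apply n).comp_continuousOn
        (hg.2.1.comp (continuous_shift.iterate k).continuousOn hmap)
    exact this.continuousWithinAt hx
  have h1 : Tendsto (fun l => f (z l) n) atTop (𝓝 (f x n)) := hcf.tendsto.comp htend
  have h2 : Tendsto (fun l => g (shift^[k] (z l)) n) atTop (𝓝 (g (shift^[k] x) n)) :=
    hcg.tendsto.comp htend
  rw [nhds_discrete, tendsto_pure] at h1 h2
  obtain ⟨l, hl1, hl2⟩ := (h1.and h2).exists
  rw [← hl1, ← hl2, hzf l]

end Aux

/-- Almost equivalent block maps on a uniformly recurrent subshift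
differ by a power of the shift. -/
theorem stmt2 {A B : Type*} [Fintype A] [Fintype B]
    [TopologicalSpace A] [DiscreteTopology A] [TopologicalSpace B] [DiscreteTopology B]
    (X : Set (ℕ → A)) (Y : Set (ℕ → B)) (hX : Subshift X) (hY : Subshift Y)
    (hUR : UniformlyRecurrent X)
    (f g : (ℕ → A) → (ℕ → B)) (hf : BlockMap X Y f) (hg : BlockMap X Y g)
    (hae : AlmostEquiv X f g) :
    ∃ k : ℕ, (∀ x ∈ X, g (shift^[k] x) = f x) ∨ (∀ x ∈ X, g x = f (shift^[k] x)) := by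
  by_cases hne : ∃ x, x ∈ X
  · obtain ⟨x₀, hx₀⟩ := hne
    obtain ⟨i, j, hij⟩ := hae x₀ hx₀
    rw [← blockmap_iter hX hf hx₀ i, ← blockmap_iter hX hg hx₀ j] at hij
    rcases le_or_gt i j with h | h
    · refine ⟨j - i, Or.inl fun x hx => ?_⟩
      have hy : shift^[i] x₀ ∈ X := mem_iter hX.2 hx₀ i
      have hfy : f (shift^[i] x₀) = g (shift^[j - i] (shift^[i] x₀)) := by
        rw [← Function.iterate_add_apply, Nat.sub_add_cancel h, hij]
      exact (key_lemma hX hUR hf hg hy hfy x hx).symm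
    · refine ⟨i - j, Or.inr fun x hx => ?_⟩
      have hy : shift^[j] x₀ ∈ X := mem_iter hX.2 hx₀ j
      have hgy : g (shift^[j] x₀) = f (shift^[i - j] (shift^[j] x₀)) := by
        rw [← Function.iterate_add_apply, Nat.sub_add_cancel h.le, hij]
      exact key_lemma hX hUR hg hf hy hgy x hx
  · exact ⟨0, Or.inl fun x hx => absurd ⟨x, hx⟩ hne⟩
end

section
/- If $\Phi : X \to Y$ is a dill map between one-sided subshifts with a nice cocycle $s$, then the map $\phi(x) = \Phi(x)_{[0, s(x)-1]}$ is an implementation of $\Phi$; i.e., $\Phi(x) = \phi(x)\,\phi(\sigma(x))\,\phi(\sigma^2(x))\cdots$ for all $x \in X$. -/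
open Filter Topology

lemma nhds_cyl {A : Type*} [TopologicalSpace A] [DiscreteTopology A]
    (x : ℕ → A) {U : Set (ℕ → A)} (hU : U ∈ 𝓝 x) :
    ∃ R : ℕ, ∀ y : ℕ → A, (∀ k ≤ R, y k = x k) → y ∈ U := by
  rw [nhds_pi, Filter.mem_pi] at hU
  obtain ⟨I, hI, V, hV, hsub⟩ := hU
  obtain ⟨R, hR⟩ := (hI.image id).bddAbove
  refine ⟨R, fun y hy => hsub fun i hi => ?_⟩
  have : y i = x i := hy i (hR ⟨i, hi, rfl⟩)
  rw [this]
  exact mem_of_mem_nhds (hV i)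

/-- the map `φ x = Φ(x)_[0, s x - 1]` built from a nice cocycle `s`
is an implementation of the dill map `Φ`. -/
theorem stmt4 {A B : Type*} [Fintype A] [Fintype B]
    [TopologicalSpace A] [DiscreteTopology A] [TopologicalSpace B] [DiscreteTopology B]
    (X : Set (ℕ → A)) (Y : Set (ℕ → B)) (hX : Subshift X) (hY : Subshift Y)
    (Φ : (ℕ → A) → (ℕ → B)) (s : (ℕ → A) → ℕ)
    (hmaps : Set.MapsTo Φ X Y) (hcont : ContinuousOn Φ X)
    (hscont : ContinuousOn s X) (hcoc : IsCocycle X Φ s)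
    (hnice : ∀ x ∈ X, ∃ n : ℕ, 0 < s (shift^[n] x)) :
    IsImplementation X Φ (fun x => List.ofFn fun k : Fin (s x) => Φ x k) := by
  constructor
  · -- word continuity
    intro x hx
    have hs : Filter.Tendsto s (nhdsWithin x X) (𝓝 (s x)) := hscont x hx
    have hev1 : ∀ᶠ y in nhdsWithin x X, s y = s x := hs (by simp : {s x} ∈ 𝓝 (s x))
    have hc : Filter.Tendsto Φ (nhdsWithin x X) (𝓝 (Φ x)) := hcont x hx
    have hk : ∀ k : ℕ, ∀ᶠ y in nhdsWithin x X, Φ y k = Φ x k := by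
      intro k
      have ht : Filter.Tendsto (fun y => Φ y k) (nhdsWithin x X) (𝓝 (Φ x k)) :=
        ((continuous_apply k).tendsto _).comp hc
      exact ht (by simp : {Φ x k} ∈ 𝓝 (Φ x k))
    have hev2 : ∀ᶠ y in nhdsWithin x X, ∀ k ∈ Finset.range (s x), Φ y k = Φ x k :=
      (Filter.eventually_all_finset _).2 fun k _ => hk k
    have hev := hev1.and hev2
    rw [Filter.Eventually, mem_nhdsWithin] at hev
    obtain ⟨u, hu_open, hxu, hsub⟩ := hev
    obtain ⟨R, hR⟩ := nhds_cyl x (hu_open.mem_nhds hxu)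
    refine ⟨R, fun y hy hagree => ?_⟩
    have hmem : y ∈ u ∩ X := ⟨hR y hagree, hy⟩
    obtain ⟨hsy, hΦy⟩ := hsub hmem
    apply List.ext_getElem
    · simp [hsy]
    · intro n h1 h2
      simp only [List.getElem_ofFn]
      exact hΦy n (Finset.mem_range.2 (by simpa [hsy] using h1))
  · intro x hx n
    by_cases h : n < s x
    · rw [dif_pos (by simpa using h)]
      simp [List.get_ofFn]
    · rw [dif_neg (by simpa using h)]
      simp only [List.length_ofFn]
      rw [hcoc x hx, Nat.sub_add_cancel (le_of_not_gt h)]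
end

section
/- Let $x \in A^{\mathbb{N}}$ be a fixed point of a primitive Pisot substitution $\tau$, and let $\mu(a) = \lim_N |x_{[0,N-1]}|_a / N$ for each letter $a$. Then there exists $C > 0$ such that for all $a \in A$ and $N \in \mathbb{N}$, $\big| |x_{[0,N-1]}|_a - N\mu(a) \big| < C$. -/
open Filter Topology

section MatrixDefs

variable {A : Type*} [Fintype A] [DecidableEq A]

/-- The associated matrix of a substitution. -/
def assocMatrix (τ : A → List A) : Matrix A A ℕ :=
  Matrix.of fun a b => (τ a).count b

/-- The complex spectrum of the associated matrix. -/
noncomputable def specC (τ : A → List A) : Set ℂ :=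
  spectrum ℂ ((assocMatrix τ).map (fun n : ℕ => (n : ℂ)))

/-- The Pisot property: one eigenvalue of modulus `> 1`, all others of modulus `< 1`. -/
def PisotSub (τ : A → List A) : Prop :=
  ∃ μ ∈ specC τ, 1 < ‖μ‖ ∧ ∀ ν ∈ specC τ, ν ≠ μ → ‖ν‖ < 1

/-- `lam` is the dominant eigenvalue of the associated matrix of `τ`. -/
def DominantEig (τ : A → List A) (lam : ℝ) : Prop :=
  (lam : ℂ) ∈ specC τ ∧ ∀ μ ∈ specC τ, μ ≠ (lam : ℂ) → ‖μ‖ < lam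

end MatrixDefs

/-!
Write `u_N` for the vector of letter counts in `x_[0,N)`, `M` for the transposed matrix of `τ`
(so that `u_{E n} = M u_n`), `ℓ` for the vector of lengths `|τ b|` and `θ = ℓ ⬝ μ`. Comparing
`u_{E n} / n` with `u_n / n` shows `M μ = θ μ`, and the deviation `D_N = u_N - N μ` then satisfies
`D_{E n} = (M - μ ℓᵀ) D_n`, while `D_N` moves by at most `|τ (x n)|` for `E n ≤ N < E (n + 1)`.

The deflated matrix `M - μ ℓᵀ` has spectral radius `< 1`: a nonzero eigenvalue `t ≠ θ` of it is an
eigenvalue of `M`, hence of modulus `< 1` by the Pisot property, and `θ` itself is excluded by a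
Perron argument (a power of `M` is positive by primitivity, and `μ > 0`) showing that `M` has no
generalised `θ`-eigenvector with coordinate sum `0`. By Gelfand's formula the norms of its powers are
summable, and unrolling the recursion bounds `D_N`.
-/

open Filter Topology Matrix

theorem Module.End.exists_norm_le_of_eventually_norm_sub_apply_le {R E : Type*} [Ring R]
    [SeminormedAddCommGroup E] [Module R E] (T : Module.End R E) {c : ℕ → ℝ} (hc : Summable c)
    (hc0 : ∀ j, 0 ≤ c j) (hT : ∀ j v, ‖(T ^ j) v‖ ≤ c j * ‖v‖) {f : ℕ → E} {K : ℝ}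
    (hf : ∀ᶠ N in atTop, ∃ n < N, ‖f N - T (f n)‖ ≤ K) : ∃ C, ∀ N, ‖f N‖ ≤ C := by
  obtain ⟨N₀, hN₀⟩ := eventually_atTop.mp hf
  set B := ∑ N ∈ Finset.range N₀, ‖f N‖
  have hB : 0 ≤ B := Finset.sum_nonneg fun _ _ => norm_nonneg _
  have hK : 0 ≤ K := by
    obtain ⟨n, -, hn⟩ := hN₀ N₀ le_rfl
    exact (norm_nonneg _).trans hn
  set t : ℕ → ℝ := fun j => ∑' i, c (i + j)
  have ht : ∀ j, t j = c j + t (j + 1) := fun j => by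
    simp only [t, ((summable_nat_add_iff j).mpr hc).tsum_eq_zero_add, zero_add, add_assoc,
      add_comm 1 j]
  have hct : ∀ j, c j ≤ t j := fun j => by
    rw [ht j]; exact le_add_of_nonneg_right (tsum_nonneg fun i => hc0 _)
  -- unrolling `f N = T (f n) + r` with `‖r‖ ≤ K`; `t j` is the tail `∑_{i ≥ j} c i`
  have key : ∀ N j, ‖(T ^ j) (f N)‖ ≤ (B + K) * t j := by
    intro N
    induction N using Nat.strong_induction_on with
    | _ N ih =>
      intro j
      rcases lt_or_ge N N₀ with hN | hN
      · have hfN : ‖f N‖ ≤ B :=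
          Finset.single_le_sum (fun _ _ => norm_nonneg _) (Finset.mem_range.2 hN)
        calc ‖(T ^ j) (f N)‖ ≤ c j * ‖f N‖ := hT j _
          _ ≤ t j * B := mul_le_mul (hct j) hfN (norm_nonneg _) ((hc0 j).trans (hct j))
          _ ≤ (B + K) * t j := by nlinarith [(hc0 j).trans (hct j)]
      · obtain ⟨n, hn, hr⟩ := hN₀ N hN
        have hsplit : (T ^ j) (f N) = (T ^ (j + 1)) (f n) + (T ^ j) (f N - T (f n)) := by
          rw [map_sub, pow_succ, Module.End.mul_apply]; abel
        calc ‖(T ^ j) (f N)‖ ≤ ‖(T ^ (j + 1)) (f n)‖ + ‖(T ^ j) (f N - T (f n))‖ :=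
              hsplit ▸ norm_add_le _ _
          _ ≤ (B + K) * t (j + 1) + c j * K :=
              add_le_add (ih n hn _) ((hT j _).trans (mul_le_mul_of_nonneg_left hr (hc0 j)))
          _ ≤ (B + K) * t j := by rw [ht j]; nlinarith [hc0 j]
  exact ⟨(B + K) * t 0, fun N => by simpa using key N 0⟩

theorem summable_norm_pow_of_spectralRadius_lt_one {𝓐 : Type*} [NormedRing 𝓐]
    [NormedAlgebra ℂ 𝓐] [CompleteSpace 𝓐] {a : 𝓐} (h : spectralRadius ℂ a < 1) :
    Summable fun n => ‖a ^ n‖ := by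
  obtain ⟨ρ, hρa, hρ1⟩ := ENNReal.lt_iff_exists_nnreal_btwn.mp h
  have hev :=
    (spectrum.pow_nnnorm_pow_one_div_tendsto_nhds_spectralRadius a).eventually_lt_const hρa
  refine Summable.of_norm_bounded_eventually_nat
    (summable_geometric_of_lt_one ρ.2 (by exact_mod_cast hρ1)) ?_
  filter_upwards [hev, eventually_ge_atTop 1] with n hn hn1
  have hn0 : (0 : ℝ) < n := by exact_mod_cast hn1
  rw [one_div, ENNReal.rpow_inv_lt_iff hn0, ENNReal.rpow_natCast] at hn
  rw [norm_norm]
  exact_mod_cast hn.le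

namespace Matrix

variable {ι : Type*} [Fintype ι]

theorem mem_spectrum_iff_exists_mulVec_eq_smul [DecidableEq ι] {K : Type*} [Field K]
    {P : Matrix ι ι K} {t : K} : t ∈ spectrum K P ↔ ∃ v ≠ 0, P *ᵥ v = t • v := by
  simp only [← spectrum_toLin', ← Module.End.hasEigenvalue_iff_mem_spectrum,
    Module.End.HasEigenvalue, Module.End.hasEigenvalue_iff, Submodule.ne_bot_iff,
    Module.End.mem_eigenspace_iff, toLin'_apply]
  aesop

theorem ofReal_mem_spectrum_map_iff [DecidableEq ι] (P : Matrix ι ι ℝ) (r : ℝ) :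
    (r : ℂ) ∈ spectrum ℂ (P.map ((↑) : ℝ → ℂ)) ↔ r ∈ spectrum ℝ P := by
  rw [show P.map ((↑) : ℝ → ℂ) = P.map Complex.ofRealHom from rfl,
    mem_spectrum_iff_isRoot_charpoly, mem_spectrum_iff_isRoot_charpoly, charpoly_map,
    Polynomial.IsRoot, Polynomial.IsRoot, ← Complex.ofRealHom_eq_coe, Polynomial.eval_map,
    Polynomial.eval₂_at_apply, Complex.ofRealHom_eq_coe, Complex.ofReal_eq_zero]

theorem pow_mulVec_eq_pow_smul [DecidableEq ι] {R : Type*} [CommSemiring R] {P : Matrix ι ι R}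
    {v : ι → R} {t : R} (h : P *ᵥ v = t • v) (m : ℕ) : P ^ m *ᵥ v = t ^ m • v := by
  induction m with
  | zero => simp
  | succ m ih => rw [pow_succ', ← mulVec_mulVec, ih, mulVec_smul, h, smul_smul, pow_succ]

section Deflation

theorem sub_vecMulVec_mulVec_sub_smul {R : Type*} [CommRing R] {P : Matrix ι ι R}
    {μ ℓ : ι → R} (hPμ : P *ᵥ μ = (ℓ ⬝ᵥ μ) • μ) (u : ι → R) (s : R) :
    (P - vecMulVec μ ℓ) *ᵥ (u - s • μ) = P *ᵥ u - (ℓ ⬝ᵥ u) • μ := by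
  rw [sub_mulVec, vecMulVec_mulVec, op_smul_eq_smul, mulVec_sub, mulVec_smul, hPμ,
    dotProduct_sub, dotProduct_smul, smul_eq_mul]
  module

variable [DecidableEq ι] {K : Type*} [Field K] {P : Matrix ι ι K} {μ : ι → K}

theorem exists_mulVec_eq_of_mem_spectrum_sub_vecMulVec {ℓ : ι → K} (hℓ : 1 ᵥ* P = ℓ)
    (hμ : ∑ i, μ i = 1) {t : K} (ht : t ∈ spectrum K (P - vecMulVec μ ℓ)) (ht0 : t ≠ 0) :
    ∃ v ≠ 0, ∑ i, v i = 0 ∧ P *ᵥ v = t • v + (ℓ ⬝ᵥ v) • μ := by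
  obtain ⟨v, hv0, hv⟩ := mem_spectrum_iff_exists_mulVec_eq_smul.mp ht
  rw [sub_mulVec, vecMulVec_mulVec, op_smul_eq_smul, sub_eq_iff_eq_add] at hv
  refine ⟨v, hv0, ?_, hv⟩
  have hsum := congrArg (1 ⬝ᵥ ·) hv
  simp only [dotProduct_mulVec, hℓ, dotProduct_add, dotProduct_smul, one_dotProduct, hμ,
    smul_eq_mul, mul_one] at hsum
  simpa [ht0] using hsum

theorem mem_spectrum_of_mulVec_eq_smul_add {v : ι → K} {s t c : K} (hPμ : P *ᵥ μ = s • μ)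
    (hμ : ∑ i, μ i = 1) (hv : v ≠ 0) (hsum : ∑ i, v i = 0) (hPv : P *ᵥ v = t • v + c • μ)
    (hts : t ≠ s) : t ∈ spectrum K P := by
  have hts' : t - s ≠ 0 := sub_ne_zero.mpr hts
  set d := c / (t - s)
  refine mem_spectrum_iff_exists_mulVec_eq_smul.mpr ⟨v + d • μ, fun hw => ?_, ?_⟩
  · have hd : d = 0 := by
      simpa [Finset.sum_add_distrib, ← Finset.mul_sum, hsum, hμ] using congrArg (∑ i, · i) hw
    exact hv (by simpa [hd] using hw)
  · rw [mulVec_add, mulVec_smul, hPv, hPμ]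
    ext i
    simp only [Pi.add_apply, Pi.smul_apply, smul_eq_mul, d]
    field_simp
    ring

end Deflation

section Perron

variable {P : Matrix ι ι ℝ} {μ : ι → ℝ}

theorem exists_sub_smul_nonneg_eq_zero [Nonempty ι] (hμ : ∀ i, 0 < μ i) (v : ι → ℝ) :
    ∃ (r : ℝ) (i₀ : ι), 0 ≤ v - r • μ ∧ (v - r • μ) i₀ = 0 := by
  obtain ⟨i₀, hi₀⟩ := Finite.exists_min fun i => v i / μ i
  refine ⟨v i₀ / μ i₀, i₀, fun i => ?_, by simp [(hμ i₀).ne']⟩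
  have := (div_le_div_iff₀ (hμ i₀) (hμ i)).mp (hi₀ i)
  simp only [Pi.zero_apply, Pi.sub_apply, Pi.smul_apply, smul_eq_mul, div_mul_eq_mul_div,
    sub_nonneg, div_le_iff₀ (hμ i₀)]
  linarith

theorem nonneg_of_mulVec_eq_smul_add [Nonempty ι] (hP : ∀ i j, 0 ≤ P i j) (hμ : ∀ i, 0 < μ i)
    {s c : ℝ} (hPμ : P *ᵥ μ = s • μ) {v : ι → ℝ} (hPv : P *ᵥ v = s • v + c • μ) : 0 ≤ c := by
  obtain ⟨r, i₀, hw, hw₀⟩ := exists_sub_smul_nonneg_eq_zero hμ v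
  have hPw : P *ᵥ (v - r • μ) = s • (v - r • μ) + c • μ := by
    rw [mulVec_sub, mulVec_smul, hPv, hPμ]; module
  have h := congrFun hPw i₀
  simp only [Pi.add_apply, Pi.smul_apply, hw₀, smul_eq_mul, mul_zero, zero_add] at h
  have : 0 ≤ c * μ i₀ := h ▸ Finset.sum_nonneg fun j _ => mul_nonneg (hP i₀ j) (hw j)
  exact nonneg_of_mul_nonneg_left this (hμ i₀)

theorem exists_eq_smul_of_mulVec_eq_smul_add [DecidableEq ι] (hP : ∀ i j, 0 ≤ P i j) {m : ℕ}
    (hPm : ∀ i j, 0 < (P ^ m) i j) (hμ : ∀ i, 0 < μ i) {s c : ℝ} (hPμ : P *ᵥ μ = s • μ)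
    {v : ι → ℝ} (hPv : P *ᵥ v = s • v + c • μ) : ∃ r : ℝ, v = r • μ := by
  rcases isEmpty_or_nonempty ι with hι | hι
  · exact ⟨0, Subsingleton.elim _ _⟩
  have hc : c = 0 := by
    refine le_antisymm ?_ (nonneg_of_mulVec_eq_smul_add hP hμ hPμ hPv)
    have : P *ᵥ (-v) = s • (-v) + (-c) • μ := by rw [mulVec_neg, hPv]; module
    simpa using nonneg_of_mulVec_eq_smul_add hP hμ hPμ this
  obtain ⟨r, i₀, hw, hw₀⟩ := exists_sub_smul_nonneg_eq_zero hμ v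
  have hPw : P *ᵥ (v - r • μ) = s • (v - r • μ) := by
    rw [mulVec_sub, mulVec_smul, hPv, hPμ, hc]; module
  have h := congrFun (pow_mulVec_eq_pow_smul hPw m) i₀
  rw [Pi.smul_apply, hw₀, smul_zero, mulVec, dotProduct,
    Finset.sum_eq_zero_iff_of_nonneg fun j _ => mul_nonneg (hPm i₀ j).le (hw j)] at h
  refine ⟨r, funext fun j => ?_⟩
  have := (mul_eq_zero.mp (h j (Finset.mem_univ j))).resolve_left (hPm i₀ j).ne'
  simpa [sub_eq_zero] using this

theorem pos_of_mulVec_eq_smul [DecidableEq ι] {m : ℕ} (hPm : ∀ i j, 0 < (P ^ m) i j)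
    (hμ : 0 ≤ μ) (hμ0 : μ ≠ 0) {s : ℝ} (hPμ : P *ᵥ μ = s • μ) (i : ι) : 0 < μ i := by
  obtain ⟨j, hj⟩ := Function.ne_iff.mp hμ0
  have hpos : 0 < (P ^ m *ᵥ μ) i :=
    Finset.sum_pos' (fun k _ => mul_nonneg (hPm i k).le (hμ k))
      ⟨j, Finset.mem_univ j, mul_pos (hPm i j) ((hμ j).lt_of_ne' hj)⟩
  rw [pow_mulVec_eq_pow_smul hPμ, Pi.smul_apply, smul_eq_mul] at hpos
  exact (hμ i).lt_of_ne' (right_ne_zero_of_mul hpos.ne')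

end Perron

section LinftyOp

attribute [local instance] Matrix.linftyOpNormedAddCommGroup Matrix.linftyOpNormedRing
  Matrix.linftyOpNormedAlgebra

variable [DecidableEq ι]

theorem linfty_opNorm_map_ofReal {m n : Type*} [Fintype m] [Fintype n] (P : Matrix m n ℝ) :
    ‖P.map ((↑) : ℝ → ℂ)‖ = ‖P‖ := by
  simp [linfty_opNorm_def]

theorem summable_linfty_opNorm_pow {P : Matrix ι ι ℝ}
    (h : ∀ t ∈ spectrum ℂ (P.map ((↑) : ℝ → ℂ)), ‖t‖ < 1) : Summable fun n => ‖P ^ n‖ := by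
  rcases isEmpty_or_nonempty ι with hι | hι
  · simp [Subsingleton.elim _ (0 : Matrix ι ι ℝ)]
  have : CompleteSpace (Matrix ι ι ℂ) := FiniteDimensional.complete ℂ _
  have hρ : spectralRadius ℂ (P.map ((↑) : ℝ → ℂ)) < (1 : NNReal) :=
    spectrum.spectralRadius_lt_of_forall_lt _ fun t ht => by exact_mod_cast h t ht
  convert summable_norm_pow_of_spectralRadius_lt_one (by exact_mod_cast hρ) using 2 with n
  rw [← linfty_opNorm_map_ofReal]
  exact congrArg norm (map_pow Complex.ofRealHom.mapMatrix P n)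

theorem exists_norm_le_of_eventually_norm_sub_mulVec_le {P : Matrix ι ι ℝ}
    (hP : ∀ t ∈ spectrum ℂ (P.map ((↑) : ℝ → ℂ)), ‖t‖ < 1) {f : ℕ → ι → ℝ} {K : ℝ}
    (hf : ∀ᶠ N in atTop, ∃ n < N, ‖f N - P *ᵥ f n‖ ≤ K) : ∃ C, ∀ N, ‖f N‖ ≤ C :=
  Module.End.exists_norm_le_of_eventually_norm_sub_apply_le (toLin' P)
    (summable_linfty_opNorm_pow hP)
    (fun _ => norm_nonneg _)
    (fun j v => by rw [← toLin'_pow, toLin'_apply]; exact linfty_opNorm_mulVec _ _) hf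

end LinftyOp

end Matrix

section Words

variable {A : Type*} [DecidableEq A]

def countVec (w : List A) : A → ℝ := fun a => w.count a

theorem countVec_append (u v : List A) : countVec (u ++ v) = countVec u + countVec v := by
  ext a; simp [countVec]

/-- The transpose of `assocMatrix τ`, so that it acts on letter-count vectors from the left. -/
def countMatrix (τ : A → List A) : Matrix A A ℝ := Matrix.of fun a b => (τ b).count a

def lengthVec (τ : A → List A) : A → ℝ := fun b => (τ b).length

theorem countMatrix_nonneg (τ : A → List A) (a b : A) : 0 ≤ countMatrix τ a b := by
  simp [countMatrix]

variable [Fintype A]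

theorem sum_countVec (w : List A) : ∑ a, countVec w a = w.length := by
  induction w with
  | nil => simp [countVec]
  | cons c w ih =>
    simp only [countVec, List.count_cons, beq_iff_eq, Nat.cast_add, Nat.cast_ite, Nat.cast_one,
      Nat.cast_zero, Finset.sum_add_distrib] at ih ⊢
    simp [ih]

theorem countMatrix_mulVec_countVec (τ : A → List A) (w : List A) :
    countMatrix τ *ᵥ countVec w = countVec (wordApply τ w) := by
  induction w with
  | nil => ext; simp [countVec, wordApply, mulVec, dotProduct]
  | cons c w ih =>
    rw [show wordApply τ (c :: w) = τ c ++ wordApply τ w from List.flatten_cons,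
      countVec_append, ← ih]
    ext a
    simp [countVec, countMatrix, mulVec, dotProduct, List.count_cons, mul_add,
      Finset.sum_add_distrib, add_comm]

theorem one_vecMul_countMatrix (τ : A → List A) : 1 ᵥ* countMatrix τ = lengthVec τ := by
  ext b
  simpa [vecMul, dotProduct, countMatrix, lengthVec, countVec] using sum_countVec (τ b)

theorem countMatrix_pow_apply (τ : A → List A) (m : ℕ) (a b : A) :
    (countMatrix τ ^ m) a b = countVec (subPow τ m b) a := by
  induction m generalizing a with
  | zero => simp [subPow, countVec, one_apply, List.count_singleton, eq_comm (a := b)]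
  | succ m ih =>
    rw [subPow, ← countMatrix_mulVec_countVec, pow_succ', mul_apply]
    simp [mulVec, dotProduct, ih]

theorem specC_eq_spectrum_countMatrix (τ : A → List A) :
    specC τ = spectrum ℂ ((countMatrix τ).map ((↑) : ℝ → ℂ)) := by
  ext t
  rw [specC, mem_spectrum_iff_isRoot_charpoly, mem_spectrum_iff_isRoot_charpoly,
    ← charpoly_transpose]
  congr!

variable {τ : A → List A}

theorem Primitive.countMatrix_pow_pos (h : Primitive τ) :
    ∃ N, ∀ n ≥ N, ∀ a b, 0 < (countMatrix τ ^ n) a b := by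
  obtain ⟨N, hN⟩ := h
  refine ⟨N, fun n hn a b => ?_⟩
  simpa [countMatrix_pow_apply, countVec] using hN n hn a b

theorem Primitive.length_pos (h : Primitive τ) (b : A) : 0 < (τ b).length := by
  obtain ⟨N, hN⟩ := h.countMatrix_pow_pos
  have hpos := hN (N + 1) N.le_succ b b
  rw [pow_succ, mul_apply] at hpos
  contrapose! hpos
  simp [countMatrix, List.eq_nil_of_length_eq_zero (Nat.le_zero.mp hpos)]

theorem PisotSub.one_lt_and_norm_lt_one (h : PisotSub τ) {θ : ℝ} (hθ : (θ : ℂ) ∈ specC τ)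
    (hθ1 : 1 ≤ θ) : 1 < θ ∧ ∀ ν ∈ specC τ, ν ≠ θ → ‖ν‖ < 1 := by
  obtain ⟨ν₀, hν₀, hν₀1, hlt⟩ := h
  have hnorm : ‖(θ : ℂ)‖ = θ := by simp [abs_of_nonneg (zero_le_one.trans hθ1)]
  obtain rfl : ν₀ = θ := by
    by_contra hne
    linarith [hlt θ hθ (Ne.symm hne)]
  exact ⟨hnorm ▸ hν₀1, hlt⟩

end Words

section FixedPoint

variable {A : Type*}

def pref (x : ℕ → A) (N : ℕ) : List A := List.ofFn fun k : Fin N => x k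

theorem pref_add (x : ℕ → A) (M K : ℕ) :
    pref x (M + K) = pref x M ++ List.ofFn fun k : Fin K => x (M + k) := by
  rw [pref, List.ofFn_add]; rfl

structure IsFixedPointWithCuts (τ : A → List A) (x : ℕ → A) (E : ℕ → ℕ) : Prop where
  zero : E 0 = 0
  succ : ∀ n, E (n + 1) = E n + (τ (x n)).length
  occursAt : ∀ n, occursAt (τ (x n)) x (E n)

namespace IsFixedPointWithCuts

variable {τ : A → List A} {x : ℕ → A} {E : ℕ → ℕ}

theorem pref_eq (hx : IsFixedPointWithCuts τ x E) (n : ℕ) :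
    pref x (E n) = wordApply τ (pref x n) := by
  induction n with
  | zero => simp [hx.zero, pref, wordApply]
  | succ n ih =>
    rw [hx.succ, pref_add, ← hx.occursAt n, ih, pref_add, wordApply, wordApply]
    simp

theorem strictMono (hx : IsFixedPointWithCuts τ x E) (hL : ∀ b, 0 < (τ b).length) :
    StrictMono E :=
  strictMono_nat_of_lt_succ fun n => by rw [hx.succ]; exact Nat.lt_add_of_pos_right (hL _)

theorem exists_mem_Ico (hx : IsFixedPointWithCuts τ x E) (hL : ∀ b, 0 < (τ b).length)
    (N : ℕ) : ∃ n, N ∈ Set.Ico (E n) (E (n + 1)) := by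
  have hex : ∃ n, N < E (n + 1) := ⟨N, (hx.strictMono hL).id_le (N + 1)⟩
  refine ⟨Nat.find hex, ?_, Nat.find_spec hex⟩
  rcases h : Nat.find hex with _ | n
  · simp [hx.zero]
  · exact not_lt.mp (Nat.find_min hex (h ▸ n.lt_succ_self))

theorem lt_self_of_lt (hx : IsFixedPointWithCuts τ x E) (hL : ∀ b, 0 < (τ b).length) {p : ℕ}
    (hp : 2 ≤ (τ (x p)).length) {n : ℕ} (hpn : p < n) : n < E n := by
  induction n, hpn using Nat.le_induction with
  | base => have := (hx.strictMono hL).id_le p; have := hx.succ p; simp at *; omega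
  | succ n _ ih => have := hx.succ n; have := hL (x n); omega

end IsFixedPointWithCuts

end FixedPoint

section Frequencies

variable {A : Type*} [DecidableEq A]

def HasFrequencies (x : ℕ → A) (μ : A → ℝ) : Prop :=
  Tendsto (fun N : ℕ => (N : ℝ)⁻¹ • countVec (pref x N)) atTop (𝓝 μ)

namespace HasFrequencies

variable {x : ℕ → A} {μ : A → ℝ}

theorem nonneg (hμ : HasFrequencies x μ) : 0 ≤ μ :=
  ge_of_tendsto' hμ fun N a => by
    simp only [Pi.zero_apply, Pi.smul_apply, smul_eq_mul, countVec]; positivity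

theorem exists_apply_eq (hμ : HasFrequencies x μ) {a : A} (ha : 0 < μ a) : ∃ p, x p = a := by
  by_contra! hne
  have hzero : ∀ N, countVec (pref x N) a = 0 := fun N => by
    simpa [countVec, pref, List.count_eq_zero, List.mem_ofFn] using fun k : Fin N => hne k
  have h := ((continuous_apply a).tendsto μ).comp hμ
  simp only [Function.comp_def, Pi.smul_apply, hzero, smul_zero] at h
  exact ha.ne (tendsto_nhds_unique tendsto_const_nhds h)

variable [Fintype A]

theorem sum_eq_one (hμ : HasFrequencies x μ) : ∑ a, μ a = 1 := by
  have hsum := ((continuous_finsetSum Finset.univ fun a _ => continuous_apply a).tendsto μ).comp hμ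
  refine tendsto_nhds_unique hsum (tendsto_const_nhds.congr' ?_)
  filter_upwards [eventually_ne_atTop 0] with N hN
  simp [← Finset.mul_sum, sum_countVec, pref, hN]

theorem le_one (hμ : HasFrequencies x μ) (a : A) : μ a ≤ 1 :=
  hμ.sum_eq_one ▸ Finset.single_le_sum (fun b _ => hμ.nonneg b) (Finset.mem_univ a)

end HasFrequencies

end Frequencies

section Deviation

variable {A : Type*} [Fintype A] [DecidableEq A] {τ : A → List A} {x : ℕ → A} {E : ℕ → ℕ}
  {μ : A → ℝ}

theorem one_le_lengthVec_dotProduct (hL : ∀ b, 0 < (τ b).length) (hμ : HasFrequencies x μ) :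
    1 ≤ lengthVec τ ⬝ᵥ μ := by
  rw [← hμ.sum_eq_one, dotProduct]
  exact Finset.sum_le_sum fun b _ =>
    le_mul_of_one_le_left (hμ.nonneg b) (Nat.one_le_cast.mpr (hL b))

namespace IsFixedPointWithCuts

theorem countVec_pref (hx : IsFixedPointWithCuts τ x E) (n : ℕ) :
    countVec (pref x (E n)) = countMatrix τ *ᵥ countVec (pref x n) := by
  rw [hx.pref_eq, countMatrix_mulVec_countVec]

theorem lengthVec_dotProduct (hx : IsFixedPointWithCuts τ x E) (n : ℕ) :
    lengthVec τ ⬝ᵥ countVec (pref x n) = E n := by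
  rw [← one_vecMul_countMatrix, ← dotProduct_mulVec, ← hx.countVec_pref, one_dotProduct,
    sum_countVec, pref, List.length_ofFn]

theorem countMatrix_mulVec_eq (hx : IsFixedPointWithCuts τ x E) (hL : ∀ b, 0 < (τ b).length)
    (hμ : HasFrequencies x μ) : countMatrix τ *ᵥ μ = (lengthVec τ ⬝ᵥ μ) • μ := by
  set f : ℕ → A → ℝ := fun N => (N : ℝ)⁻¹ • countVec (pref x N)
  have h₁ : Tendsto (fun n => countMatrix τ *ᵥ f n) atTop (𝓝 (countMatrix τ *ᵥ μ)) :=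
    ((continuous_const.matrix_mulVec continuous_id).tendsto μ).comp hμ
  have h₂ : Tendsto (fun n => (lengthVec τ ⬝ᵥ f n) • f (E n)) atTop
      (𝓝 ((lengthVec τ ⬝ᵥ μ) • μ)) :=
    (((continuous_const.dotProduct continuous_id).tendsto μ).comp hμ).smul
      (hμ.comp (hx.strictMono hL).tendsto_atTop)
  refine tendsto_nhds_unique h₁ (h₂.congr' ?_)
  filter_upwards [eventually_ne_atTop 0] with n hn
  have hEn : (E n : ℝ) ≠ 0 :=
    Nat.cast_ne_zero.mpr ((hx.strictMono hL).id_le n |>.trans_lt' (Nat.pos_of_ne_zero hn)).ne'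
  simp only [f, dotProduct_smul, hx.lengthVec_dotProduct, smul_smul, mulVec_smul,
    hx.countVec_pref, smul_eq_mul]
  field_simp

end IsFixedPointWithCuts

def deviation (x : ℕ → A) (μ : A → ℝ) (N : ℕ) : A → ℝ := countVec (pref x N) - (N : ℝ) • μ

def deflation (τ : A → List A) (μ : A → ℝ) : Matrix A A ℝ :=
  countMatrix τ - vecMulVec μ (lengthVec τ)

theorem abs_deviation_sub_le (hμ : HasFrequencies x μ) {M N : ℕ} (hMN : M ≤ N) (a : A) :
    |deviation x μ N a - deviation x μ M a| ≤ N - M := by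
  obtain ⟨K, rfl⟩ := Nat.exists_eq_add_of_le hMN
  set c := countVec (List.ofFn fun k : Fin K => x (M + k)) a
  have hc : c ≤ K := by
    simpa [c, countVec] using List.count_le_length (l := List.ofFn fun k : Fin K => x (M + k))
  have hc0 : 0 ≤ c := by simp [c, countVec]
  have hKμ : 0 ≤ (K : ℝ) * μ a := mul_nonneg K.cast_nonneg (hμ.nonneg a)
  have hKμK : (K : ℝ) * μ a ≤ K := mul_le_of_le_one_right K.cast_nonneg (hμ.le_one a)
  have key : deviation x μ (M + K) a - deviation x μ M a = c - K * μ a := by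
    simp only [deviation, pref_add, countVec_append, Pi.sub_apply, Pi.add_apply, Pi.smul_apply,
      smul_eq_mul, Nat.cast_add, c]
    ring
  rw [key, Nat.cast_add, add_sub_cancel_left, abs_le]
  constructor <;> linarith

namespace IsFixedPointWithCuts

theorem deflation_mulVec_deviation (hx : IsFixedPointWithCuts τ x E)
    (heig : countMatrix τ *ᵥ μ = (lengthVec τ ⬝ᵥ μ) • μ) (n : ℕ) :
    deflation τ μ *ᵥ deviation x μ n = deviation x μ (E n) := by
  rw [deflation, deviation, sub_vecMulVec_mulVec_sub_smul heig, deviation, hx.countVec_pref,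
    hx.lengthVec_dotProduct]

theorem norm_deviation_sub_le (hx : IsFixedPointWithCuts τ x E) (hμ : HasFrequencies x μ)
    (heig : countMatrix τ *ᵥ μ = (lengthVec τ ⬝ᵥ μ) • μ) {n N : ℕ}
    (hN : N ∈ Set.Ico (E n) (E (n + 1))) :
    ‖deviation x μ N - deflation τ μ *ᵥ deviation x μ n‖ ≤ ∑ b, ((τ b).length : ℝ) := by
  rw [hx.deflation_mulVec_deviation heig, pi_norm_le_iff_of_nonneg (by positivity)]
  intro a
  have hlen : ((τ (x n)).length : ℝ) ≤ ∑ b, ((τ b).length : ℝ) :=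
    Finset.single_le_sum (f := fun b => ((τ b).length : ℝ)) (fun b _ => Nat.cast_nonneg _)
      (Finset.mem_univ (x n))
  have hNE : (N : ℝ) - E n ≤ (τ (x n)).length := by
    rw [sub_le_iff_le_add', ← Nat.cast_add, ← hx.succ, Nat.cast_le]
    exact hN.2.le
  rw [Real.norm_eq_abs]
  exact (abs_deviation_sub_le hμ hN.1 a).trans (hNE.trans hlen)

/-- Since `θ > 1` some letter has an image of length `≥ 2`; once it has occurred in `x`, the cut
points satisfy `E n > n`. -/
theorem eventually_exists_lt_mem_Ico (hx : IsFixedPointWithCuts τ x E)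
    (hL : ∀ b, 0 < (τ b).length) (hμ : HasFrequencies x μ) (hμpos : ∀ a, 0 < μ a)
    (hθ : 1 < lengthVec τ ⬝ᵥ μ) :
    ∀ᶠ N in atTop, ∃ n < N, N ∈ Set.Ico (E n) (E (n + 1)) := by
  obtain ⟨b, hb⟩ : ∃ b, 2 ≤ (τ b).length := by
    by_contra! h
    refine hθ.not_ge ((Finset.sum_le_sum fun b _ => ?_).trans_eq hμ.sum_eq_one)
    exact mul_le_of_le_one_left (hμ.nonneg b) (Nat.cast_le_one.mpr (Nat.le_of_lt_succ (h b)))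
  obtain ⟨p, rfl⟩ := hμ.exists_apply_eq (hμpos b)
  filter_upwards [eventually_ge_atTop (E (p + 1))] with N hN
  obtain ⟨n, hn⟩ := hx.exists_mem_Ico hL N
  have hpn : p < n := by
    by_contra! h
    exact (hn.2.trans_le ((hx.strictMono hL).monotone (by omega))).not_ge hN
  exact ⟨n, (hx.lt_self_of_lt hL hb hpn).trans_le hn.1, hn⟩

end IsFixedPointWithCuts

end Deviation

section Spectrum

variable {A : Type*} [Fintype A] [DecidableEq A] {τ : A → List A} {x : ℕ → A} {μ : A → ℝ}

theorem HasFrequencies.pos (hμ : HasFrequencies x μ) (hprim : Primitive τ)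
    (heig : countMatrix τ *ᵥ μ = (lengthVec τ ⬝ᵥ μ) • μ) (a : A) : 0 < μ a := by
  obtain ⟨m, hm⟩ := hprim.countMatrix_pow_pos
  have hμ0 : μ ≠ 0 := fun h => by simpa [h] using hμ.sum_eq_one
  exact pos_of_mulVec_eq_smul (hm m le_rfl) hμ.nonneg hμ0 heig a

theorem ofReal_mem_specC (hμ0 : μ ≠ 0) {θ : ℝ} (heig : countMatrix τ *ᵥ μ = θ • μ) :
    (θ : ℂ) ∈ specC τ := by
  rw [specC_eq_spectrum_countMatrix, ofReal_mem_spectrum_map_iff,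
    mem_spectrum_iff_exists_mulVec_eq_smul]
  exact ⟨μ, hμ0, heig⟩

theorem norm_lt_one_of_mem_spectrum_deflation (hprim : Primitive τ) (hμ : ∀ a, 0 < μ a)
    (hsum : ∑ a, μ a = 1) (heig : countMatrix τ *ᵥ μ = (lengthVec τ ⬝ᵥ μ) • μ)
    (hlt : ∀ ν ∈ specC τ, ν ≠ (lengthVec τ ⬝ᵥ μ : ℝ) → ‖ν‖ < 1) :
    ∀ t ∈ spectrum ℂ ((deflation τ μ).map ((↑) : ℝ → ℂ)), ‖t‖ < 1 := by
  set θ := lengthVec τ ⬝ᵥ μ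
  intro t ht
  rcases eq_or_ne t 0 with rfl | ht0
  · simp
  rcases eq_or_ne t θ with rfl | htθ
  · exfalso
    rw [ofReal_mem_spectrum_map_iff] at ht
    obtain ⟨v, hv0, hsumv, hPv⟩ := exists_mulVec_eq_of_mem_spectrum_sub_vecMulVec
      (one_vecMul_countMatrix τ) hsum ht (by exact_mod_cast ht0)
    obtain ⟨m, hm⟩ := hprim.countMatrix_pow_pos
    obtain ⟨r, rfl⟩ := exists_eq_smul_of_mulVec_eq_smul_add (countMatrix_nonneg τ)
      (hm m le_rfl) hμ heig hPv
    simp only [Pi.smul_apply, smul_eq_mul, ← Finset.mul_sum, hsum, mul_one] at hsumv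
    exact hv0 (by simp [hsumv])
  have hmap : (deflation τ μ).map ((↑) : ℝ → ℂ) = (countMatrix τ).map ((↑) : ℝ → ℂ) -
      vecMulVec (fun a => (μ a : ℂ)) (fun b => (lengthVec τ b : ℂ)) := by
    ext a b; simp [deflation, vecMulVec]
  have hℓ : 1 ᵥ* (countMatrix τ).map ((↑) : ℝ → ℂ) = fun b => (lengthVec τ b : ℂ) := by
    ext b
    rw [← one_vecMul_countMatrix]
    exact (Complex.ofRealHom.map_vecMul (countMatrix τ) 1 b).symm
  have hsumc : ∑ a, (μ a : ℂ) = 1 := by exact_mod_cast hsum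
  have heigc : (countMatrix τ).map ((↑) : ℝ → ℂ) *ᵥ (fun a => (μ a : ℂ)) =
      (θ : ℂ) • fun a => (μ a : ℂ) := by
    ext a
    rw [Pi.smul_apply, smul_eq_mul, ← Complex.ofReal_mul, ← smul_eq_mul, ← Pi.smul_apply, ← heig]
    exact (Complex.ofRealHom.map_mulVec (countMatrix τ) μ a).symm
  rw [hmap] at ht
  obtain ⟨v, hv0, hsumv, hPv⟩ := exists_mulVec_eq_of_mem_spectrum_sub_vecMulVec hℓ hsumc ht ht0
  refine hlt t ?_ htθ
  rw [specC_eq_spectrum_countMatrix]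
  exact mem_spectrum_of_mulVec_eq_smul_add heigc hsumc hv0 hsumv hPv htθ

end Spectrum

/-- letter counts in prefixes of a fixed point of a primitive
Pisot substitution deviate boundedly from their frequencies. -/
theorem stmt11 {A : Type*} [Fintype A] [DecidableEq A]
    (τ : A → List A) (hprim : Primitive τ) (hPisot : PisotSub τ)
    (x : ℕ → A)
    -- `x` is a fixed point of `τ`: `x = τ(x₀)τ(x₁)⋯`, with `E` the cutting points
    (E : ℕ → ℕ) (hE0 : E 0 = 0) (hEs : ∀ n, E (n + 1) = E n + (τ (x n)).length)
    (hfix : ∀ n, occursAt (τ (x n)) x (E n))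
    (μ : A → ℝ)
    (hμ : ∀ a : A, Filter.Tendsto
      (fun N : ℕ => (((List.ofFn fun k : Fin N => x k).count a : ℝ)) / N)
      Filter.atTop (nhds (μ a))) :
    ∃ C > 0, ∀ (a : A) (N : ℕ),
      |(((List.ofFn fun k : Fin N => x k).count a : ℝ)) - N * μ a| < C := by
  have hx : IsFixedPointWithCuts τ x E := ⟨hE0, hEs, hfix⟩
  have hfreq : HasFrequencies x μ :=
    tendsto_pi_nhds.mpr fun a => by simpa [div_eq_inv_mul, countVec, pref] using hμ a
  have hL := hprim.length_pos
  have heig := hx.countMatrix_mulVec_eq hL hfreq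
  have hμpos := hfreq.pos hprim heig
  obtain ⟨hθ, hlt⟩ := hPisot.one_lt_and_norm_lt_one
    (ofReal_mem_specC (fun h => (hμpos (x 0)).ne' (congrFun h _)) heig)
    (one_le_lengthVec_dotProduct hL hfreq)
  obtain ⟨C, hC⟩ := exists_norm_le_of_eventually_norm_sub_mulVec_le
    (norm_lt_one_of_mem_spectrum_deflation hprim hμpos hfreq.sum_eq_one heig hlt)
    (f := deviation x μ) <| (hx.eventually_exists_lt_mem_Ico hL hfreq hμpos hθ).mono
      fun N ⟨n, hnN, hN⟩ => ⟨n, hnN, hx.norm_deviation_sub_le hfreq heig hN⟩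
  refine ⟨max C 0 + 1, by positivity, fun a N => ?_⟩
  calc |((List.ofFn fun k : Fin N => x k).count a : ℝ) - N * μ a| = ‖deviation x μ N a‖ := rfl
    _ ≤ ‖deviation x μ N‖ := norm_le_pi_norm _ a
    _ < max C 0 + 1 := by linarith [hC N, le_max_left C 0]
end

section
/- Let $\tau$ be a primitive Pisot substitution with dominant eigenvalue $\lambda$, and suppose there exists $C > 0$ such that for all words $u, v$ of the same length occurring in $X_\tau$ and each letter $a$, $\big||u|_a - |v|_a\big| < C$ (letter-balancedness). Then $\tau$ has balanced growth as a dill map on $X_\tau$: there exists $D \in \mathbb{N}$ such that $\big| |\tau(w)| - \lambda |w| \big| \le D$ for every word $w$ occurring in $X_\tau$. -/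
open Filter Topology

/-!
Balancedness makes each letter count additive up to a bounded error, so by Fekete's lemma every
letter `a` has a frequency `α a` with `|w|_a = α a * |w| + O(1)` on the language (which has words
of every length, since the Pisot eigenvalue forces `|τⁿ(a)|` to grow). Hence
`|τ(w)| = L * |w| + O(1)` for `L = ∑ a, α a * |τ a|`, and computing `|τ(w)|_b` in two ways shows
that `α` is a left eigenvector of the substitution matrix for `L`. Conversely the estimate gives
`|τⁿ(a)| ≤ max L 1 ^ n * (1 + D * n)`, while an eigenvector for `ν` gives some letter with
`|ν| ^ n ≤ |τⁿ(a)|`; so every eigenvalue has modulus at most `max L 1`. The Pisot eigenvalue then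
forces `L > 1`, and dominance of `λ` leaves only `L = λ`.
-/

open Asymptotics

theorem exists_abs_sub_mul_le_of_abs_add_sub_le {f : ℕ → ℝ} {E : ℝ}
    (h : ∀ m n, |f (m + n) - f m - f n| ≤ E) : ∃ α : ℝ, ∀ n : ℕ, |f n - α * n| ≤ E := by
  have hf0 : |f 0| ≤ E := by simpa using h 0 0
  -- `±f + E` is subadditive; by Fekete's lemma `(±f n + E) / n` is bounded below by its limit,
  -- and the two limits are opposite.
  have hsub : ∀ s : ℝ, |s| = 1 → Subadditive fun n => s * f n + E := fun s hs m n => by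
    have := le_abs_self (s * (f (m + n) - f m - f n))
    rw [abs_mul, hs, one_mul] at this
    linarith [h m n]
  have hbdd : ∀ s : ℝ, |s| = 1 → BddBelow (Set.range fun n : ℕ => (s * f n + E) / n) := by
    intro s hs
    refine ⟨min 0 (s * f 1 - E), ?_⟩
    rintro _ ⟨n, rfl⟩
    rcases Nat.eq_zero_or_pos n with rfl | hn
    · simp
    have h1 := (hsub (-s) (by rwa [abs_neg])).apply_mul_add_le n 1 0
    have h2 := neg_abs_le (s * f 0)
    rw [abs_mul, hs, one_mul] at h2
    simp only [mul_one, add_zero] at h1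
    refine (min_le_right _ _).trans ((le_div_iff₀ (by exact_mod_cast hn)).2 ?_)
    nlinarith
  have hp := (hsub 1 abs_one).tendsto_lim (hbdd 1 abs_one)
  have hm := (hsub (-1) (by simp)).tendsto_lim (hbdd (-1) (by simp))
  have hsum : (hsub 1 abs_one).lim + (hsub (-1) (by simp)).lim = 0 := by
    have h2E : Tendsto (fun n : ℕ => 2 * E / n) atTop (𝓝 0) :=
      tendsto_const_nhds.div_atTop tendsto_natCast_atTop_atTop
    refine tendsto_nhds_unique (hp.add hm) (h2E.congr fun n => ?_)
    ring
  refine ⟨(hsub 1 abs_one).lim, fun n => ?_⟩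
  rcases Nat.eq_zero_or_pos n with rfl | hn
  · simpa using hf0
  have hn' : (0 : ℝ) < n := by exact_mod_cast hn
  have h1 := (hsub 1 abs_one).lim_le_div (hbdd 1 abs_one) hn.ne'
  have h2 := (hsub (-1) (by simp)).lim_le_div (hbdd (-1) (by simp)) hn.ne'
  rw [le_div_iff₀ hn'] at h1 h2
  rw [abs_le]
  constructor <;> nlinarith

theorem le_of_forall_pow_le_pow_mul {r K a b : ℝ} (hK : 0 < K)
    (h : ∀ n : ℕ, r ^ n ≤ K ^ n * (a + b * n)) : r ≤ K := by
  by_contra! hr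
  have hρ : 0 ≤ K / r ∧ K / r < 1 :=
    ⟨div_nonneg hK.le (hK.trans hr).le, (div_lt_one (hK.trans hr)).2 hr⟩
  have hlim : Tendsto (fun n : ℕ => a * (K / r) ^ n + b * (n * (K / r) ^ n)) atTop (𝓝 0) := by
    simpa using ((tendsto_pow_atTop_nhds_zero_of_lt_one hρ.1 hρ.2).const_mul a).add
      ((tendsto_self_mul_const_pow_of_lt_one hρ.1 hρ.2).const_mul b)
  refine absurd (ge_of_tendsto' hlim fun n => ?_) zero_lt_one.not_ge
  have hrn : 0 < r ^ n := pow_pos (hK.trans hr) n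
  calc (1 : ℝ) = r ^ n / r ^ n := (div_self hrn.ne').symm
    _ ≤ K ^ n * (a + b * n) / r ^ n := by gcongr; exact h n
    _ = a * (K / r) ^ n + b * (n * (K / r) ^ n) := by rw [div_pow]; ring

section Words

variable {A : Type*}

theorem wordApply_append (τ : A → List A) (u v : List A) :
    wordApply τ (u ++ v) = wordApply τ u ++ wordApply τ v := by
  simp [wordApply]

theorem InLanguage.of_infix {τ : A → List A} {u w : List A} (h : u <:+: w)
    (hw : InLanguage τ w) : InLanguage τ u :=
  let ⟨a, n, hn⟩ := hw; ⟨a, n, h.trans hn⟩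

theorem InLanguage.wordApply {τ : A → List A} {w : List A} (hw : InLanguage τ w) :
    InLanguage τ (wordApply τ w) := by
  obtain ⟨a, n, s, t, hst⟩ := hw
  exact ⟨a, n + 1, _root_.wordApply τ s, _root_.wordApply τ t, by
    rw [← wordApply_append, ← wordApply_append, hst]; rfl⟩

theorem inLanguage_subPow (τ : A → List A) (n : ℕ) (a : A) : InLanguage τ (subPow τ n a) :=
  ⟨a, n, List.infix_refl _⟩

theorem length_subPow_le {τ : A → List A} {L D : ℝ}
    (hτ : ∀ w, InLanguage τ w → ((wordApply τ w).length : ℝ) ≤ L * w.length + D)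
    (n : ℕ) (a : A) : ((subPow τ n a).length : ℝ) ≤ max L 1 ^ n * (1 + D * n) := by
  have hD : 0 ≤ D := by simpa [wordApply] using hτ [] ⟨a, 0, List.nil_infix⟩
  induction n with
  | zero => simp [subPow]
  | succ n ih =>
    have hK : 1 ≤ max L 1 ^ (n + 1) := one_le_pow₀ (le_max_right _ _)
    calc ((subPow τ (n + 1) a).length : ℝ) ≤ L * (subPow τ n a).length + D :=
          hτ _ (inLanguage_subPow τ n a)
      _ ≤ max L 1 * (max L 1 ^ n * (1 + D * n)) + D * max L 1 ^ (n + 1) := by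
          have hK0 : 0 ≤ max L 1 := zero_le_one.trans (le_max_right _ _)
          exact add_le_add (mul_le_mul (le_max_left _ _) ih (Nat.cast_nonneg _) hK0)
            (le_mul_of_one_le_right hD hK)
      _ = max L 1 ^ (n + 1) * (1 + D * (n + 1 : ℕ)) := by push_cast; ring

variable [Fintype A] [DecidableEq A]

theorem sum_map_eq_sum_count {M : Type*} [AddCommMonoid M] (w : List A) (f : A → M) :
    (w.map f).sum = ∑ a, w.count a • f a := by
  rw [Finset.sum_list_map_count]
  exact Finset.sum_subset (Finset.subset_univ _) fun a _ ha => by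
    rw [List.count_eq_zero.2 (by simpa using ha), zero_smul]

theorem sum_count_eq_length (w : List A) : ∑ a, w.count a = w.length := by
  simpa using (sum_map_eq_sum_count w fun _ => (1 : ℕ)).symm

theorem length_wordApply (τ : A → List A) (w : List A) :
    (wordApply τ w).length = ∑ a, w.count a * (τ a).length := by
  simp [wordApply, List.length_flatten, sum_map_eq_sum_count]

theorem count_wordApply (τ : A → List A) (w : List A) (b : A) :
    (wordApply τ w).count b = ∑ a, w.count a * (τ a).count b := by
  simp [wordApply, List.count_flatten, sum_map_eq_sum_count]

theorem assocMatrix_pow_apply (τ : A → List A) (n : ℕ) (a b : A) :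
    (assocMatrix τ ^ n) a b = (subPow τ n a).count b := by
  induction n generalizing b with
  | zero => simp [subPow, Matrix.one_apply, List.count_singleton]
  | succ n ih =>
    simp only [pow_succ, Matrix.mul_apply, ih, subPow, count_wordApply]
    rfl

end Words

namespace Matrix

variable {n K : Type*} [Fintype n] [DecidableEq n] [Field K]

theorem mem_spectrum_iff_det_eq_zero (M : Matrix n n K) (μ : K) :
    μ ∈ spectrum K M ↔ (algebraMap K _ μ - M).det = 0 := by
  rw [spectrum.mem_iff, isUnit_iff_isUnit_det, isUnit_iff_ne_zero, not_not]

theorem exists_mulVec_eq_smul_of_mem_spectrum {M : Matrix n n K} {μ : K}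
    (h : μ ∈ spectrum K M) : ∃ v ≠ 0, M *ᵥ v = μ • v := by
  obtain ⟨v, hv, hMv⟩ := exists_mulVec_eq_zero_iff.2 ((mem_spectrum_iff_det_eq_zero M μ).1 h)
  refine ⟨v, hv, ?_⟩
  rw [sub_mulVec, Algebra.algebraMap_eq_smul_one, smul_mulVec, one_mulVec, sub_eq_zero] at hMv
  exact hMv.symm

theorem mem_spectrum_of_vecMul_eq_smul {M : Matrix n n K} {μ : K} {v : n → K} (hv : v ≠ 0)
    (h : v ᵥ* M = μ • v) : μ ∈ spectrum K M := by
  refine (mem_spectrum_iff_det_eq_zero M μ).2 (exists_vecMul_eq_zero_iff.1 ⟨v, hv, ?_⟩)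
  rw [vecMul_sub, Algebra.algebraMap_eq_smul_one, vecMul_smul, vecMul_one, h, sub_self]

end Matrix

section Frequencies

variable {A : Type*} {S : Set (List A)}

theorem eq_zero_of_isBigO_length (hS : ∀ n, ∃ w ∈ S, w.length = n) {c : ℝ}
    (h : (fun w : List A => c * w.length) =O[𝓟 S] fun _ => (1 : ℝ)) : c = 0 := by
  obtain ⟨K, hK⟩ := isBigO_principal.1 h
  by_contra hc
  obtain ⟨n, hn⟩ := exists_nat_gt (K / |c|)
  obtain ⟨w, hw, rfl⟩ := hS n
  have hcw := hK w hw
  rw [div_lt_iff₀ (abs_pos.2 hc)] at hn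
  simp only [norm_mul, Real.norm_eq_abs, Nat.abs_cast, norm_one, mul_one] at hcw
  linarith

theorem exists_isBigO_sub_mul_length (hS : ∀ ⦃u w⦄, u <:+: w → w ∈ S → u ∈ S)
    (hlong : ∀ n, ∃ w ∈ S, w.length = n) {f : List A → ℝ} (hf : ∀ u v, f (u ++ v) = f u + f v)
    {C : ℝ} (hbal : ∀ u ∈ S, ∀ v ∈ S, u.length = v.length → |f u - f v| ≤ C) :
    ∃ α : ℝ, (fun w => f w - α * w.length) =O[𝓟 S] fun _ => (1 : ℝ) := by
  choose W hWS hWlen using hlong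
  have hadd : ∀ m n, |f (W (m + n)) - f (W m) - f (W n)| ≤ 2 * C := fun m n => by
    have hu := hbal _ (hS (List.take_prefix m _).isInfix (hWS (m + n))) _ (hWS m)
      (by simp [hWlen])
    have hv := hbal _ (hS (List.drop_suffix m _).isInfix (hWS (m + n))) _ (hWS n)
      (by simp [hWlen])
    rw [← List.take_append_drop m (W (m + n)), hf]
    calc _ = |(f ((W (m + n)).take m) - f (W m)) + (f ((W (m + n)).drop m) - f (W n))| := by
          ring_nf
      _ ≤ 2 * C := (abs_add_le _ _).trans (by linarith)
  obtain ⟨α, hα⟩ := exists_abs_sub_mul_le_of_abs_add_sub_le (f := fun n => f (W n)) hadd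
  refine ⟨α, isBigO_principal.2 ⟨C + 2 * C, fun w hw => ?_⟩⟩
  have hw' := hbal w hw _ (hWS w.length) (hWlen _).symm
  have hαw := hα w.length
  rw [Real.norm_eq_abs, Real.norm_eq_abs, abs_one, mul_one]
  calc |f w - α * w.length| = |(f w - f (W w.length)) + (f (W w.length) - α * w.length)| := by
        ring_nf
    _ ≤ C + 2 * C := (abs_add_le _ _).trans (add_le_add hw' hαw)

end Frequencies

section Growth

variable {A : Type*} [Fintype A] [DecidableEq A]

open Matrix in
theorem exists_norm_pow_le_length_subPow {τ : A → List A} {μ : ℂ} (hμ : μ ∈ specC τ) :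
    ∃ a, ∀ n : ℕ, ‖μ‖ ^ n ≤ (subPow τ n a).length := by
  set M := (assocMatrix τ).map (Nat.cast : ℕ → ℂ)
  obtain ⟨v, hv, hMv⟩ := exists_mulVec_eq_smul_of_mem_spectrum hμ
  obtain ⟨a₁, ha₁⟩ := Function.ne_iff.1 hv
  obtain ⟨a, -, ha⟩ := Finset.exists_max_image Finset.univ (‖v ·‖) ⟨a₁, Finset.mem_univ _⟩
  have hva : 0 < ‖v a‖ := (norm_pos_iff.2 ha₁).trans_le (ha a₁ (Finset.mem_univ _))
  refine ⟨a, fun n => le_of_mul_le_mul_right ?_ hva⟩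
  have hpow : (M ^ n) *ᵥ v = μ ^ n • v := by
    induction n with
    | zero => simp
    | succ n ih => rw [pow_succ, ← mulVec_mulVec, hMv, mulVec_smul, ih, smul_smul, pow_succ']
  have hentry : μ ^ n * v a = ∑ b, ((assocMatrix τ ^ n) a b : ℂ) * v b := by
    have hMn : M ^ n = (assocMatrix τ ^ n).map (Nat.cast : ℕ → ℂ) :=
      (map_pow (Nat.castRingHom ℂ).mapMatrix _ n).symm
    rw [← smul_eq_mul, ← Pi.smul_apply, ← hpow, hMn]
    rfl
  calc ‖μ‖ ^ n * ‖v a‖ = ‖∑ b, ((assocMatrix τ ^ n) a b : ℂ) * v b‖ := by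
        rw [← hentry, norm_mul, norm_pow]
    _ ≤ ∑ b, ((assocMatrix τ ^ n) a b : ℝ) * ‖v a‖ := by
        refine (norm_sum_le _ _).trans (Finset.sum_le_sum fun b _ => ?_)
        rw [norm_mul, Complex.norm_natCast]
        exact mul_le_mul_of_nonneg_left (ha b (Finset.mem_univ _)) (Nat.cast_nonneg _)
    _ = (subPow τ n a).length * ‖v a‖ := by
        rw [← Finset.sum_mul]
        simp only [assocMatrix_pow_apply]
        exact_mod_cast congrArg (fun k : ℕ => (k : ℝ) * ‖v a‖) (sum_count_eq_length _)

theorem norm_le_max_of_length_wordApply_le {τ : A → List A} {L D : ℝ}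
    (hτ : ∀ w, InLanguage τ w → ((wordApply τ w).length : ℝ) ≤ L * w.length + D)
    {μ : ℂ} (hμ : μ ∈ specC τ) : ‖μ‖ ≤ max L 1 := by
  obtain ⟨a, ha⟩ := exists_norm_pow_le_length_subPow hμ
  exact le_of_forall_pow_le_pow_mul (zero_lt_one.trans_le (le_max_right _ _))
    fun n => (ha n).trans (length_subPow_le hτ n a)

theorem exists_inLanguage_length_eq {τ : A → List A} {μ : ℂ} (hμ : μ ∈ specC τ) (hμ1 : 1 < ‖μ‖)
    (n : ℕ) : ∃ w ∈ {w | InLanguage τ w}, w.length = n := by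
  obtain ⟨a, ha⟩ := exists_norm_pow_le_length_subPow hμ
  obtain ⟨m, hm⟩ := pow_unbounded_of_one_lt (n : ℝ) hμ1
  have hn : n ≤ (subPow τ m a).length := by exact_mod_cast hm.le.trans (ha m)
  exact ⟨(subPow τ m a).take n, (inLanguage_subPow τ m a).of_infix (List.take_prefix _ _).isInfix,
    List.length_take_of_le hn⟩

end Growth

section Balanced

variable {A : Type*} [Fintype A] [DecidableEq A] {τ : A → List A} {S : Set (List A)}
  {α : A → ℝ}

theorem isBigO_sum_count_mul_sub
    (hα : ∀ a, (fun w : List A => (w.count a : ℝ) - α a * w.length) =O[𝓟 S] fun _ => (1 : ℝ))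
    (g : A → ℝ) :
    (fun w : List A => ∑ a, (w.count a : ℝ) * g a - (∑ a, α a * g a) * w.length) =O[𝓟 S]
      fun _ => (1 : ℝ) :=
  (IsBigO.fun_sum fun a _ => (hα a).const_mul_left (g a)).congr_left fun w => by
    simp only [Finset.sum_mul, ← Finset.sum_sub_distrib]
    exact Finset.sum_congr rfl fun a _ => by ring

theorem isBigO_length_wordApply_sub
    (hα : ∀ a, (fun w : List A => (w.count a : ℝ) - α a * w.length) =O[𝓟 S] fun _ => (1 : ℝ)) :
    (fun w : List A => ((wordApply τ w).length : ℝ) - (∑ a, α a * (τ a).length) * w.length)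
      =O[𝓟 S] fun _ => (1 : ℝ) :=
  (isBigO_sum_count_mul_sub hα _).congr_left fun w => by
    rw [length_wordApply]
    push_cast
    rfl

theorem mem_specC_of_isBigO_count (hlong : ∀ n, ∃ w ∈ {w | InLanguage τ w}, w.length = n)
    (hα : ∀ a, (fun w : List A => (w.count a : ℝ) - α a * w.length)
      =O[𝓟 {w | InLanguage τ w}] fun _ => (1 : ℝ)) :
    ((∑ a, α a * (τ a).length : ℝ) : ℂ) ∈ specC τ := by
  set L := ∑ a, α a * ((τ a).length : ℝ)
  have hsum : ∑ a, α a = 1 := by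
    refine (sub_eq_zero.1 (eq_zero_of_isBigO_length hlong
      ((isBigO_sum_count_mul_sub hα fun _ => 1).congr_left fun w => ?_))).symm
    simp only [mul_one]
    rw [← Nat.cast_sum, sum_count_eq_length]
    ring
  -- `|τ w|_b` is both `∑ a, |w|_a * |τ a|_b` and `α b * |τ w| + O(1)`.
  have heig (b : A) : ∑ a, α a * (τ a).count b = L * α b := by
    have h1 := isBigO_sum_count_mul_sub hα fun a => ((τ a).count b : ℝ)
    have h2 := (hα b).comp_tendsto
      (tendsto_principal_principal.2 fun w (hw : InLanguage τ w) => hw.wordApply)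
    have h3 := (isBigO_length_wordApply_sub (τ := τ) hα).const_mul_left (α b)
    refine sub_eq_zero.1 (eq_zero_of_isBigO_length hlong
      (((h2.sub h1).add h3).congr_left fun w => ?_))
    simp only [Function.comp_apply, count_wordApply]
    push_cast
    ring
  refine Matrix.mem_spectrum_of_vecMul_eq_smul (v := fun a => (α a : ℂ)) ?_ (funext fun b => ?_)
  · obtain ⟨a, -, ha⟩ := Finset.exists_ne_zero_of_sum_ne_zero (hsum ▸ one_ne_zero)
    exact fun h => ha (by simpa using congrFun h a)
  · simp only [Matrix.vecMul, dotProduct, assocMatrix, Matrix.map_apply, Matrix.of_apply,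
      Pi.smul_apply, smul_eq_mul]
    exact_mod_cast heig b

theorem DominantEig.eq_of_norm_le_max {lam L : ℝ} (hdom : DominantEig τ lam)
    (hL : (L : ℂ) ∈ specC τ) (hbound : ∀ ν ∈ specC τ, ‖ν‖ ≤ max L 1) {μ : ℂ} (hμ : μ ∈ specC τ)
    (hμ1 : 1 < ‖μ‖) : L = lam := by
  have hL1 : 1 < L := by
    by_contra! h
    exact (hμ1.trans_le (hbound μ hμ)).ne' (max_eq_right h)
  have hlam : |lam| ≤ L := by
    simpa [max_eq_left hL1.le] using hbound _ hdom.1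
  by_contra hne
  have := hdom.2 _ hL (by exact_mod_cast hne)
  rw [Complex.norm_real, Real.norm_eq_abs] at this
  linarith [le_abs_self L, le_abs_self lam]

end Balanced

theorem stmt12_general {A : Type*} [Fintype A] [DecidableEq A]
    (τ : A → List A) (hPisot : PisotSub τ)
    (lam : ℝ) (hdom : DominantEig τ lam)
    (C : ℝ)
    (hbal : ∀ u v : List A, InLanguage τ u → InLanguage τ v → u.length = v.length →
      ∀ a : A, |((u.count a : ℝ)) - (v.count a : ℝ)| < C) :
    ∃ D : ℕ, ∀ w : List A, InLanguage τ w →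
      |(((wordApply τ w).length : ℝ)) - lam * w.length| ≤ D := by
  obtain ⟨μ, hμ, hμ1, -⟩ := hPisot
  have hlong := exists_inLanguage_length_eq hμ hμ1
  choose α hα using fun a => exists_isBigO_sub_mul_length
    (fun u w h (hw : InLanguage τ w) => hw.of_infix h) hlong (f := fun w => (w.count a : ℝ))
    (fun u v => by simp [List.count_append]) (fun u hu v hv h => (hbal u v hu hv h a).le)
  obtain ⟨D, hD⟩ := isBigO_principal.1 (isBigO_length_wordApply_sub (τ := τ) hα)
  have hτ : ∀ w, InLanguage τ w →
      |((wordApply τ w).length : ℝ) - (∑ a, α a * (τ a).length) * w.length| ≤ D :=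
    fun w hw => by simpa using hD w hw
  have hL := hdom.eq_of_norm_le_max (mem_specC_of_isBigO_count hlong hα)
    (fun ν hν => norm_le_max_of_length_wordApply_le (D := D)
      (fun w hw => by linarith [(abs_le.1 (hτ w hw)).2]) hν) hμ hμ1
  exact ⟨⌈D⌉₊, fun w hw => hL ▸ (hτ w hw).trans (Nat.le_ceil D)⟩

/-- a letter-balanced primitive Pisot substitution has balanced
growth as a dill map on its subshift. -/
theorem stmt12 {A : Type*} [Fintype A] [DecidableEq A]
    (τ : A → List A) (hprim : Primitive τ) (hPisot : PisotSub τ)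
    (lam : ℝ) (hdom : DominantEig τ lam)
    (C : ℝ) (hC : 0 < C)
    (hbal : ∀ u v : List A, InLanguage τ u → InLanguage τ v → u.length = v.length →
      ∀ a : A, |((u.count a : ℝ)) - (v.count a : ℝ)| < C) :
    ∃ D : ℕ, ∀ w : List A, InLanguage τ w →
      |(((wordApply τ w).length : ℝ)) - lam * w.length| ≤ D :=
  stmt12_general τ hPisot lam hdom C hbal
end

section
/- Let $\tau$ be an injective primitive uniform aperiodic substitution of length $m$ with fixed point $x \in A^{\mathbb{N}}$. Suppose that for every residue $h \in [1, m-1]$, every word that occurs in $x$ at some position $\equiv 0 \pmod m$ also occurs in $x$ at some position $\equiv h \pmod m$. Then for every $K \ge 2$ there exists a nonempty word $u$ with $u^K$ occurring in $x$. -/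
open Filter Topology

/-!
Pulling an occurrence of a factor back through `τ` and pushing it forward again shows, by
induction on `n`, that every factor of `x` occurs at every residue modulo `M = m ^ n`.
Choose `n` with `M > |A| ^ (K + 1)` and let `w` be any factor of length `K * M`. Among its
occurrences `M * q_h + h`, one for each residue `h < M`, two (`h < h'`) have the same factor of
length `K + 1` at `q_h` and `q_h'`; applying `τ ^ n`, `x` agrees after `M * q_h` and `M * q_h'`
on length `M * (K + 1)`. Hence `w` also occurs at `M * q_h + h'`, so the occurrence at
`M * q_h + h` has period `h' - h < M` over length `K * M`, which contains a `K`-th power.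
-/

section Powers

variable {A : Type*}

theorem occursAt_iff {w : List A} {x : ℕ → A} {i : ℕ} :
    occursAt w x i ↔ ∀ t (ht : t < w.length), w[t] = x (i + t) := by
  simp [occursAt, List.ext_getElem_iff]

theorem occursAt_ofFn_iff {x : ℕ → A} {i j l : ℕ} :
    occursAt (List.ofFn fun k : Fin l => x (i + k)) x j ↔ ∀ t < l, x (i + t) = x (j + t) := by
  simp [occursAt_iff]

theorem occursAt.agree {w : List A} {x : ℕ → A} {i j : ℕ} (hi : occursAt w x i)
    (hj : occursAt w x j) {t : ℕ} (ht : t < w.length) : x (i + t) = x (j + t) := by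
  rw [← occursAt_iff.1 hi t ht, occursAt_iff.1 hj t ht]

theorem occursAt.append {u v : List A} {x : ℕ → A} {i : ℕ} (hu : occursAt u x i)
    (hv : occursAt v x (i + u.length)) : occursAt (u ++ v) x i := by
  rw [occursAt_iff] at *
  intro t ht
  rw [List.getElem_append]
  split_ifs with h
  · exact hu t h
  · rw [hv _ (by simp at ht; omega)]
    congr 1
    omega

theorem occursAt_flatten_replicate {u : List A} {x : ℕ → A} {i : ℕ} (K : ℕ)
    (h : ∀ k < K, occursAt u x (i + k * u.length)) :
    occursAt (List.replicate K u).flatten x i := by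
  induction K generalizing i with
  | zero => simp [occursAt]
  | succ K ih =>
    rw [List.replicate_succ, List.flatten_cons]
    refine occursAt.append (by simpa using h 0 K.succ_pos) (ih fun k hk => ?_)
    have hk1 := h (k + 1) (by omega)
    rwa [show i + (k + 1) * u.length = i + u.length + k * u.length by ring] at hk1

theorem exists_pow_occursAt_of_period {x : ℕ → A} {P d L : ℕ} (K : ℕ) (hd : 0 < d)
    (hKd : K * d ≤ L) (hper : ∀ t < L, x (P + d + t) = x (P + t)) :
    ∃ u : List A, u ≠ [] ∧ occursAt (List.replicate K u).flatten x P := by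
  refine ⟨List.ofFn fun k : Fin d => x (P + k), by simpa using hd.ne', ?_⟩
  refine occursAt_flatten_replicate K fun k hk => occursAt_ofFn_iff.2 fun t ht => ?_
  simp only [List.length_ofFn]
  induction k with
  | zero => simp
  | succ k ih =>
    have hkd : k * d + t < L := by nlinarith
    rw [ih (by omega), show P + (k + 1) * d + t = P + d + (k * d + t) by ring, hper _ hkd,
      add_assoc]

end Powers

section Residues

variable {A : Type*}

/-- The self-similarity of a fixed point of a substitution of constant length `M`. -/
def AgreementScales (x : ℕ → A) (M : ℕ) : Prop :=
  ∀ q q' l, (∀ t < l, x (q + t) = x (q' + t)) → ∀ t < M * l, x (M * q + t) = x (M * q' + t)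

def FactorsAtAllResidues (x : ℕ → A) (M : ℕ) : Prop :=
  ∀ i l s, s < M → ∃ j, j % M = s ∧ ∀ t < l, x (i + t) = x (j + t)

theorem agreementScales_of_fixed {τ : A → List A} {m : ℕ} (huni : ∀ a, (τ a).length = m)
    {x : ℕ → A} (hfix : ∀ n, occursAt (τ (x n)) x (m * n)) : AgreementScales x m := by
  intro q q' l h t ht
  have hm : 0 < m := Nat.pos_of_ne_zero (by rintro rfl; simp at ht)
  have ha : t / m < l := Nat.div_lt_of_lt_mul ht
  have hocc' : occursAt (τ (x (q + t / m))) x (m * (q' + t / m)) := by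
    rw [h _ ha]
    exact hfix _
  have hagree := (hfix (q + t / m)).agree hocc' (t := t % m) (by rw [huni]; exact Nat.mod_lt _ hm)
  calc x (m * q + t) = x (m * (q + t / m) + t % m) := by rw [mul_add, add_assoc, Nat.div_add_mod]
    _ = x (m * (q' + t / m) + t % m) := hagree
    _ = x (m * q' + t) := by rw [mul_add, add_assoc, Nat.div_add_mod]

theorem AgreementScales.mul {x : ℕ → A} {M N : ℕ} (hM : AgreementScales x M)
    (hN : AgreementScales x N) : AgreementScales x (M * N) := by
  intro q q' l h t ht
  simpa only [mul_assoc] using hM _ _ _ (hN q q' l h) t (by rwa [← mul_assoc])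

theorem AgreementScales.pow {x : ℕ → A} {m : ℕ} (h : AgreementScales x m) (n : ℕ) :
    AgreementScales x (m ^ n) := by
  induction n with
  | zero => intro q q' l hl; simpa using hl
  | succ n ih => rw [pow_succ]; exact ih.mul h

theorem factorsAtAllResidues_of_mod {x : ℕ → A} {m : ℕ} (hm : 0 < m)
    (hmod : ∀ h : ℕ, 0 < h → h < m → ∀ w : List A,
      (∃ i : ℕ, i % m = 0 ∧ occursAt w x i) → ∃ j : ℕ, j % m = h ∧ occursAt w x j) :
    FactorsAtAllResidues x m := by
  have hzero : ∀ h < m, ∀ i l, i % m = 0 → ∃ j, j % m = h ∧ ∀ t < l, x (i + t) = x (j + t) := by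
    intro h hh i l hi
    rcases Nat.eq_zero_or_pos h with rfl | hpos
    · exact ⟨i, hi, fun _ _ => rfl⟩
    obtain ⟨j, hj, hocc⟩ := hmod h hpos hh _ ⟨i, hi, occursAt_ofFn_iff.2 fun _ _ => rfl⟩
    exact ⟨j, hj, occursAt_ofFn_iff.1 hocc⟩
  intro i l s hs
  -- the window of length `r + l` starting at the multiple of `m` just before `i`
  set r := i % m
  have hr : r < m := Nat.mod_lt _ hm
  have hi : m * (i / m) + r = i := Nat.div_add_mod i m
  obtain ⟨j, hj, hagree⟩ :=
    hzero ((s + (m - r)) % m) (Nat.mod_lt _ hm) (m * (i / m)) (r + l) (Nat.mul_mod_right _ _)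
  refine ⟨j + r, ?_, fun t ht => ?_⟩
  · rw [← Nat.mod_add_mod, hj, Nat.mod_add_mod, show s + (m - r) + r = s + m by omega,
      Nat.add_mod_right, Nat.mod_eq_of_lt hs]
  · rw [← hi, add_assoc, hagree _ (by omega), add_assoc]

theorem FactorsAtAllResidues.mul {x : ℕ → A} {m M : ℕ} (hscale : AgreementScales x m)
    (hm : FactorsAtAllResidues x m) (hM : FactorsAtAllResidues x M) :
    FactorsAtAllResidues x (m * M) := by
  intro i l s hs
  have hmpos : 0 < m := Nat.pos_of_ne_zero (by rintro rfl; simp at hs)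
  obtain ⟨j, hj, hagree⟩ := hm i l (s % m) (Nat.mod_lt _ hmpos)
  obtain ⟨p, hp, hagree'⟩ := hM (j / m) (l + 1) (s / m) (Nat.div_lt_of_lt_mul hs)
  have hscaled := hscale _ _ _ hagree'
  refine ⟨m * p + s % m, ?_, fun t ht => ?_⟩
  · rw [← Nat.div_add_mod p M, hp, mul_add, ← mul_assoc, add_assoc, Nat.div_add_mod,
      Nat.mul_add_mod, Nat.mod_eq_of_lt hs]
  · have hlt : s % m + t < m * (l + 1) := by
      have := Nat.mod_lt s hmpos
      nlinarith
    rw [hagree t ht, ← Nat.div_add_mod j m, hj, add_assoc, hscaled _ hlt, add_assoc]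

theorem FactorsAtAllResidues.pow {x : ℕ → A} {m : ℕ} (hscale : AgreementScales x m)
    (hm : FactorsAtAllResidues x m) (n : ℕ) : FactorsAtAllResidues x (m ^ n) := by
  induction n with
  | zero => exact fun i _ s hs => ⟨i, by simp_all [Nat.mod_one], fun _ _ => rfl⟩
  | succ n ih => rw [pow_succ']; exact hm.mul hscale ih

theorem FactorsAtAllResidues.exists_pow_occursAt [Fintype A] {x : ℕ → A} {M : ℕ}
    (hres : FactorsAtAllResidues x M) (K : ℕ) (hscale : AgreementScales x M)
    (hM : Fintype.card A ^ (K + 1) < M) :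
    ∃ u : List A, u ≠ [] ∧ ∃ i, occursAt (List.replicate K u).flatten x i := by
  choose j hj hagree using fun g : Fin M => hres 0 (K * M) g g.isLt
  obtain ⟨g, g', hne, hE⟩ := Fintype.exists_ne_map_eq_of_card_lt
    (fun g : Fin M => fun t : Fin (K + 1) => x (j g / M + t)) (by simpa using hM)
  wlog hlt : g < g' generalizing g g'
  · exact this g' g hne.symm hE.symm (lt_of_le_of_ne (not_lt.1 hlt) hne.symm)
  have hdecomp : ∀ g, M * (j g / M) + g = j g := fun g => by rw [← hj g, Nat.div_add_mod]
  have hscaled := hscale _ _ _ fun t ht => congrFun hE ⟨t, ht⟩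
  have hg' := g'.isLt
  suffices hper : ∀ t < K * M, x (j g + (g' - g) + t) = x (j g + t) by
    obtain ⟨u, hu, hocc⟩ := exists_pow_occursAt_of_period K (Nat.sub_pos_of_lt hlt)
      (Nat.mul_le_mul_left K (by omega)) hper
    exact ⟨u, hu, _, hocc⟩
  intro t ht
  have hlt' : g' + t < M * (K + 1) := by nlinarith
  calc x (j g + (g' - g) + t) = x (M * (j g / M) + (g' + t)) := by
        have := hdecomp g; congr 1; omega
    _ = x (j g' + t) := by rw [hscaled _ hlt', ← add_assoc, hdecomp]
    _ = x (j g + t) := by rw [← hagree g' t ht, hagree g t ht]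

end Residues

theorem length_subPow {A : Type*} {τ : A → List A} {m : ℕ} (huni : ∀ a, (τ a).length = m)
    (n : ℕ) (a : A) : (subPow τ n a).length = m ^ n := by
  induction n generalizing a with
  | zero => simp [subPow]
  | succ n ih =>
    have hτ : List.length ∘ τ = fun _ => m := funext huni
    simp [subPow, wordApply, List.length_flatten, hτ, ih, pow_succ, mul_comm]

theorem two_le_of_mem_Xsub {A : Type*} {τ : A → List A} {m : ℕ} (huni : ∀ a, (τ a).length = m)
    {x : ℕ → A} (hx : x ∈ Xsub τ) : 2 ≤ m := by
  obtain ⟨a, n, hinfix⟩ := hx 0 2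
  have hlen := hinfix.length_le
  rw [length_subPow huni, List.length_ofFn] at hlen
  by_contra! hm
  have : m ^ n ≤ 1 := pow_le_one₀ (Nat.zero_le m) (by omega)
  omega

theorem stmt13_general {A : Type*} [Fintype A]
    (τ : A → List A) (m : ℕ)
    (huni : ∀ a : A, (τ a).length = m)
    (x : ℕ → A) (hx : x ∈ Xsub τ)
    (hfix : ∀ n : ℕ, occursAt (τ (x n)) x (m * n))
    (hmod : ∀ h : ℕ, 0 < h → h < m → ∀ w : List A,
      (∃ i : ℕ, i % m = 0 ∧ occursAt w x i) →
      ∃ j : ℕ, j % m = h ∧ occursAt w x j) :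
    ∀ K : ℕ, 2 ≤ K → ∃ u : List A, u ≠ [] ∧
      ∃ i : ℕ, occursAt (List.flatten (List.replicate K u)) x i := by
  intro K _
  have hm := two_le_of_mem_Xsub huni hx
  have hscale := agreementScales_of_fixed huni hfix
  have hres := factorsAtAllResidues_of_mod (by omega) hmod
  set n := Fintype.card A ^ (K + 1)
  exact (hres.pow hscale n).exists_pow_occursAt K (hscale.pow n)
    (n.lt_two_pow_self.trans_le (Nat.pow_le_pow_left hm n))

/-- if every `0 mod m`-factor of the fixed point of an injective
primitive uniform aperiodic substitution is also an `h mod m`-factor for each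
`h ∈ [1, m-1]`, then the fixed point contains arbitrarily high powers. -/
theorem stmt13 {A : Type*} [Fintype A] [DecidableEq A]
    (τ : A → List A) (m : ℕ)
    (huni : ∀ a : A, (τ a).length = m) (hinj : Function.Injective τ)
    (hprim : Primitive τ)
    (haper : ∀ y ∈ Xsub τ, ∀ p : ℕ, 0 < p → shift^[p] y ≠ y)
    (x : ℕ → A) (hx : x ∈ Xsub τ)
    (hfix : ∀ n : ℕ, occursAt (τ (x n)) x (m * n))
    (hmod : ∀ h : ℕ, 0 < h → h < m → ∀ w : List A,
      (∃ i : ℕ, i % m = 0 ∧ occursAt w x i) →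
      ∃ j : ℕ, j % m = h ∧ occursAt w x j) :
    ∀ K : ℕ, 2 ≤ K → ∃ u : List A, u ≠ [] ∧
      ∃ i : ℕ, occursAt (List.flatten (List.replicate K u)) x i :=
  stmt13_general τ m huni x hx hfix hmod
end

section
/- Let $\tau$ be a recognizable injective uniform primitive aperiodic substitution of length $m$ on its two-sided subshift $X_\tau^{\leftrightarrow}$, with the partition $X_\tau^{\leftrightarrow} = \bigsqcup_{p=0}^{m-1} X^p$ where $X^0 = \tau(X_\tau^{\leftrightarrow})$ and $X^p = \sigma^p(X^0)$. Then for every block map $f : X_\tau^{\leftrightarrow} \to X_\tau^{\leftrightarrow}$ there exists $p \in [0, m-1]$ such that $f(X^0) \subset X^p$. -/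
open Filter Topology

section TwoSided

variable {A : Type*} {B : Type*}

/-- The two-sided shift map. -/
def shiftZ (x : ℤ → A) : ℤ → A := fun n => x (n + 1)

/-- The power `σ^k` of the two-sided shift, for `k : ℤ`. -/
def shiftZk (k : ℤ) (x : ℤ → A) : ℤ → A := fun n => x (n + k)

/-- The action of a uniform substitution of length `m` on two-sided configurations. -/
def subApplyZ [Inhabited A] (τ : A → List A) (m : ℕ) (x : ℤ → A) : ℤ → A :=
  fun i => (τ (x (Int.fdiv i m))).getD (Int.fmod i m).toNat default

/-- The two-sided subshift of the substitution `τ`. -/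
def XsubZ (τ : A → List A) : Set (ℤ → A) :=
  {x | ∀ (i : ℤ) (l : ℕ), InLanguage τ (List.ofFn fun k : Fin l => x (i + k))}

/-- A block map between two-sided subshifts. -/
def BlockMapZ [TopologicalSpace A] [TopologicalSpace B] (X : Set (ℤ → A)) (Y : Set (ℤ → B))
    (f : (ℤ → A) → (ℤ → B)) : Prop :=
  Set.MapsTo f X Y ∧ ContinuousOn f X ∧ ∀ x ∈ X, f (shiftZ x) = shiftZ (f x)

/-- Uniform recurrence for two-sided subshifts. -/
def URZ (X : Set (ℤ → A)) : Prop :=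
  ∀ x ∈ X, ∀ l : ℕ, ∃ N : ℕ, ∀ y ∈ X, ∃ i : ℤ, 0 ≤ i ∧ i < N ∧
    ∀ k : ℕ, k < l → y (i + k) = x k

end TwoSided

/-- The (discrete) topology on `Option A`, i.e. on the alphabet `A ∪ {#}`. -/
instance optionTopology {A : Type*} [TopologicalSpace A] : TopologicalSpace (Option A) := ⊥

/-!
The period class is read off the marks of the recognizability map `R` in the window `[0, m)`,
so it is locally constant, and shifting a point moves its class from `p` to `p + 1` modulo `m`.
Since `f` commutes with the shift, the difference of the classes of `f z` and `z`, taken in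
`ZMod m`, is a locally constant shift-invariant function; by uniform recurrence every orbit
comes arbitrarily close to every point, so this difference is constant. On `X⁰` the class of `z`
is `0`, hence `f` maps all of `X⁰` into one class.
-/

instance optionTopology_discrete {A : Type*} [TopologicalSpace A] :
    DiscreteTopology (Option A) := ⟨rfl⟩

section Shift

variable {A : Type*}

theorem shiftZ_eq_shiftZk_one (x : ℤ → A) : shiftZ x = shiftZk 1 x := rfl

theorem shiftZk_zero (x : ℤ → A) : shiftZk 0 x = x := by
  funext n
  simp [shiftZk]

theorem shiftZ_shiftZk (k : ℤ) (x : ℤ → A) : shiftZ (shiftZk k x) = shiftZk (k + 1) x := by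
  funext n
  simp only [shiftZ, shiftZk]
  ring_nf

theorem shiftZ_iterate_apply (n : ℕ) (x : ℤ → A) (k : ℤ) : shiftZ^[n] x k = x (k + n) := by
  induction n generalizing x with
  | zero => simp
  | succ n ih =>
    rw [Function.iterate_succ_apply, ih]
    simp only [shiftZ]
    push_cast
    ring_nf

theorem shiftZk_mem_XsubZ {τ : A → List A} {x : ℤ → A} (hx : x ∈ XsubZ τ) (j : ℤ) :
    shiftZk j x ∈ XsubZ τ := by
  intro i l
  simpa only [shiftZk, add_right_comm] using hx (i + j) l

theorem shiftZk_subApplyZ [Inhabited A] (τ : A → List A) {m : ℕ} (hm : 0 < m) (x : ℤ → A) :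
    shiftZk m (subApplyZ τ m x) = subApplyZ τ m (shiftZ x) := by
  have hmZ : (0 : ℤ) ≤ m := Int.natCast_nonneg m
  have hm' : (m : ℤ) ≠ 0 := by exact_mod_cast hm.ne'
  funext n
  have hdiv : (n + m).fdiv m = n.fdiv m + 1 := by
    rw [Int.fdiv_eq_ediv_of_nonneg _ hmZ, Int.fdiv_eq_ediv_of_nonneg _ hmZ,
      show n + m = n + 1 * m by ring, Int.add_mul_ediv_right _ _ hm']
  have hmod : (n + m).fmod m = n.fmod m := by
    rw [Int.fmod_eq_emod_of_nonneg _ hmZ, Int.fmod_eq_emod_of_nonneg _ hmZ, Int.add_emod_right]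
  simp only [shiftZk, subApplyZ, shiftZ, hdiv, hmod]

end Shift

section LocallyConstant

theorem continuousOn_of_factor {α β γ : Type*} [TopologicalSpace α] [TopologicalSpace β]
    [TopologicalSpace γ] [DiscreteTopology γ] {s : Set α} {W : α → γ} {g : α → β}
    (hW : ContinuousOn W s) (hg : ∀ x ∈ s, ∀ y ∈ s, W y = W x → g y = g x) :
    ContinuousOn g s := by
  intro x hx
  have hWx : ∀ᶠ y in 𝓝[s] x, W y = W x := by
    simpa only [ContinuousWithinAt, nhds_discrete, tendsto_pure] using hW x hx
  refine (tendsto_pure.2 ?_).mono_right (pure_le_nhds _)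
  filter_upwards [hWx, self_mem_nhdsWithin] with y hy hys
  exact hg x hx y hys hy

variable {A β : Type*} [TopologicalSpace A] [DiscreteTopology A]
  [TopologicalSpace β] [DiscreteTopology β]

theorem ContinuousOn.exists_window_eq {X : Set (ℤ → A)} {F : (ℤ → A) → β}
    (hF : ContinuousOn F X) {x : ℤ → A} (hx : x ∈ X) :
    ∃ l : ℕ, ∀ y ∈ X, (∀ k : ℤ, k.natAbs ≤ l → y k = x k) → F y = F x := by
  obtain ⟨U, hUopen, hxU, hU⟩ :=
    mem_nhdsWithin.1 (hF x hx ((isOpen_discrete {F x}).mem_nhds rfl))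
  have hUx : U ∈ 𝓝 x := hUopen.mem_nhds hxU
  rw [nhds_pi, Filter.mem_pi] at hUx
  obtain ⟨I, hIfin, t, ht, hIt⟩ := hUx
  obtain ⟨l, hl⟩ := (hIfin.image Int.natAbs).bddAbove
  refine ⟨l, fun y hy hyx => hU ⟨hIt fun i hi => ?_, hy⟩⟩
  have hti : t i ∈ pure (x i) := nhds_discrete A ▸ ht i
  rw [hyx i (hl (Set.mem_image_of_mem _ hi))]
  exact hti

theorem URZ.eq_of_continuousOn_of_shiftZ_invariant {X : Set (ℤ → A)} (hUR : URZ X)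
    (hX : ∀ x ∈ X, ∀ j : ℤ, shiftZk j x ∈ X) {G : (ℤ → A) → β} (hG : ContinuousOn G X)
    (hGinv : ∀ x ∈ X, G (shiftZ x) = G x) {x y : ℤ → A} (hx : x ∈ X) (hy : y ∈ X) :
    G y = G x := by
  have hiter : ∀ n : ℕ, shiftZ^[n] y ∈ X ∧ G (shiftZ^[n] y) = G y := by
    intro n
    induction n with
    | zero => exact ⟨hy, rfl⟩
    | succ n ih =>
      rw [Function.iterate_succ_apply', shiftZ_eq_shiftZk_one]
      exact ⟨hX _ ih.1 1, by rw [← shiftZ_eq_shiftZk_one, hGinv _ ih.1, ih.2]⟩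
  obtain ⟨l, hl⟩ := hG.exists_window_eq hx
  -- the `l`-window of `x` around `0` reappears in `y` around `i + l`
  obtain ⟨N, hN⟩ := hUR _ (hX x hx (-l)) (2 * l + 1)
  obtain ⟨i, hi0, -, hocc⟩ := hN y hy
  obtain ⟨hnX, hnG⟩ := hiter (i.toNat + l)
  rw [← hnG]
  refine hl _ hnX fun k hk => ?_
  have hkl : (((k + l).toNat : ℕ) : ℤ) = k + l := Int.toNat_of_nonneg (by omega)
  have := hocc (k + l).toNat (by omega)
  simp only [shiftZk, hkl] at this
  rw [shiftZ_iterate_apply]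
  convert this using 2 <;> push_cast <;> omega

end LocallyConstant

section PeriodClass

variable {A : Type*} [Inhabited A]

/-- The set `X^p = σ^p (τ (X_τ))`. -/
def periodClass (τ : A → List A) (m p : ℕ) : Set (ℤ → A) :=
  shiftZk (p : ℤ) '' (subApplyZ τ m '' XsubZ τ)

open Classical in
/-- The period class of `z`; it is `0` (a junk value) when `z` lies in no `X^p` with `p < m`. -/
noncomputable def periodIndex (τ : A → List A) (m : ℕ) (z : ℤ → A) : ℕ :=
  if h : ∃ p, p < m ∧ z ∈ periodClass τ m p then Nat.find h else 0

variable {τ : A → List A} {m : ℕ}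

theorem mem_periodClass_zero {y : ℤ → A} (hy : y ∈ subApplyZ τ m '' XsubZ τ) :
    y ∈ periodClass τ m 0 :=
  ⟨y, hy, by simp [shiftZk_zero]⟩

theorem shiftZ_mem_periodClass (hm : 0 < m) {p : ℕ} (hp : p < m) {z : ℤ → A}
    (hz : z ∈ periodClass τ m p) : shiftZ z ∈ periodClass τ m ((p + 1) % m) := by
  obtain ⟨_, ⟨x, hx, rfl⟩, rfl⟩ := hz
  rcases (show p + 1 ≤ m from hp).lt_or_eq with hlt | heq
  · rw [Nat.mod_eq_of_lt hlt]
    exact ⟨_, ⟨x, hx, rfl⟩, by rw [shiftZ_shiftZk]; push_cast; rfl⟩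
  · rw [heq, Nat.mod_self]
    refine ⟨_, ⟨shiftZ x, shiftZk_mem_XsubZ hx 1, rfl⟩, ?_⟩
    rw [Nat.cast_zero, shiftZk_zero, shiftZ_shiftZk, ← shiftZk_subApplyZ τ hm, ← heq]
    push_cast
    rfl

theorem exists_mem_periodClass
    (hcover : XsubZ τ = ⋃ p ∈ Finset.range m, periodClass τ m p) {z : ℤ → A}
    (hz : z ∈ XsubZ τ) : ∃ p < m, z ∈ periodClass τ m p := by
  rw [hcover] at hz
  simpa only [Set.mem_iUnion, Finset.mem_range, exists_prop] using hz

theorem mem_XsubZ_of_mem_periodClass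
    (hcover : XsubZ τ = ⋃ p ∈ Finset.range m, periodClass τ m p) {p : ℕ} (hp : p < m)
    {z : ℤ → A} (hz : z ∈ periodClass τ m p) : z ∈ XsubZ τ := by
  rw [hcover]
  exact Set.mem_biUnion (Finset.mem_range.2 hp) hz

open Classical in
theorem periodIndex_spec {z : ℤ → A} (h : ∃ p < m, z ∈ periodClass τ m p) :
    periodIndex τ m z < m ∧ z ∈ periodClass τ m (periodIndex τ m z) := by
  have h' : ∃ p, p < m ∧ z ∈ periodClass τ m p := h
  rw [periodIndex, dif_pos h']
  exact Nat.find_spec h'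

theorem periodIndex_eq_of_mem
    (hdisj : ∀ p < m, ∀ q < m, p ≠ q → Disjoint (periodClass τ m p) (periodClass τ m q))
    {p : ℕ} (hp : p < m) {z : ℤ → A} (hz : z ∈ periodClass τ m p) : periodIndex τ m z = p := by
  obtain ⟨hlt, hmem⟩ := periodIndex_spec ⟨p, hp, hz⟩
  by_contra hne
  exact Set.disjoint_left.1 (hdisj _ hlt _ hp hne) hmem hz

theorem periodIndex_shiftZ (hm : 0 < m)
    (hdisj : ∀ p < m, ∀ q < m, p ≠ q → Disjoint (periodClass τ m p) (periodClass τ m q))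
    {z : ℤ → A} (hz : ∃ p < m, z ∈ periodClass τ m p) :
    (periodIndex τ m (shiftZ z) : ZMod m) = periodIndex τ m z + 1 := by
  obtain ⟨hlt, hmem⟩ := periodIndex_spec hz
  rw [periodIndex_eq_of_mem hdisj (Nat.mod_lt _ hm) (shiftZ_mem_periodClass hm hlt hmem),
    ZMod.natCast_mod, Nat.cast_succ]

theorem periodIndex_eq_of_marks_eq {R : (ℤ → A) → (ℤ → Option A)}
    (hR : ∀ p < m, ∀ y ∈ periodClass τ m p, ∀ i : ℤ, (R y i ≠ none ↔ (i - p) % (m : ℤ) = 0))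
    {z w : ℤ → A} (hz : ∃ p < m, z ∈ periodClass τ m p) (hw : ∃ p < m, w ∈ periodClass τ m p)
    (hzw : ∀ i : Fin m, R w i = R z i) : periodIndex τ m w = periodIndex τ m z := by
  obtain ⟨hzlt, hzmem⟩ := periodIndex_spec hz
  obtain ⟨hwlt, hwmem⟩ := periodIndex_spec hw
  have hmark : R w (periodIndex τ m z) ≠ none := by
    rw [hzw ⟨_, hzlt⟩]
    exact (hR _ hzlt z hzmem _).2 (by simp)
  have hdvd : (m : ℤ) ∣ periodIndex τ m z - periodIndex τ m w :=
    Int.dvd_of_emod_eq_zero ((hR _ hwlt w hwmem _).1 hmark)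
  have := Int.eq_zero_of_abs_lt_dvd hdvd (abs_lt.2 (by omega))
  omega

theorem continuousOn_periodIndex [TopologicalSpace A]
    (hcover : XsubZ τ = ⋃ p ∈ Finset.range m, periodClass τ m p)
    {R : (ℤ → A) → (ℤ → Option A)} (hRcont : ContinuousOn R (XsubZ τ))
    (hR : ∀ p < m, ∀ y ∈ periodClass τ m p, ∀ i : ℤ, (R y i ≠ none ↔ (i - p) % (m : ℤ) = 0)) :
    ContinuousOn (periodIndex τ m) (XsubZ τ) :=
  continuousOn_of_factor (W := fun z => fun i : Fin m => R z i)
    (continuousOn_pi.2 fun _ => (continuous_apply _).comp_continuousOn hRcont)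
    fun _ hz _ hw hzw => periodIndex_eq_of_marks_eq hR (exists_mem_periodClass hcover hz)
      (exists_mem_periodClass hcover hw) (congrFun hzw)

end PeriodClass

theorem stmt15_general {A : Type*} [Inhabited A]
    [TopologicalSpace A] [DiscreteTopology A]
    (τ : A → List A) (m : ℕ) (hm : 0 < m)
    (hUR : URZ (XsubZ τ))
    (hcover : XsubZ τ = ⋃ p ∈ Finset.range m,
      shiftZk (p : ℤ) '' (subApplyZ τ m '' XsubZ τ))
    (hdisj : ∀ p < m, ∀ q < m, p ≠ q →
      Disjoint (shiftZk (p : ℤ) '' (subApplyZ τ m '' XsubZ τ))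
        (shiftZk (q : ℤ) '' (subApplyZ τ m '' XsubZ τ)))
    -- recognizability: the block map `R`, marking exactly the cutting points
    (R : (ℤ → A) → (ℤ → Option A))
    (hRcont : ContinuousOn R (XsubZ τ))
    (hR : ∀ p < m, ∀ y ∈ shiftZk (p : ℤ) '' (subApplyZ τ m '' XsubZ τ), ∀ i : ℤ,
      (R y i ≠ none ↔ (i - p) % (m : ℤ) = 0))
    (f : (ℤ → A) → (ℤ → A)) (hf : BlockMapZ (XsubZ τ) (XsubZ τ) f) :
    ∃ p < m, ∀ y ∈ subApplyZ τ m '' XsubZ τ,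
      f y ∈ shiftZk (p : ℤ) '' (subApplyZ τ m '' XsubZ τ) := by
  obtain ⟨hfX, hfcont, hfshift⟩ := hf
  have hclass := fun z (hz : z ∈ XsubZ τ) => exists_mem_periodClass hcover hz
  have hP := continuousOn_periodIndex hcover hRcont hR
  let G : (ℤ → A) → ZMod m := fun z => (periodIndex τ m (f z) : ZMod m) - periodIndex τ m z
  have hGcont : ContinuousOn G (XsubZ τ) :=
    continuousOn_of_factor ((hP.comp hfcont hfX).prodMk hP) fun _ _ _ _ h => by
      simp only [G, Prod.ext_iff, Function.comp_apply] at h ⊢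
      rw [h.1, h.2]
  have hGinv : ∀ z ∈ XsubZ τ, G (shiftZ z) = G z := fun z hz => by
    simp only [G, hfshift z hz, periodIndex_shiftZ hm hdisj (hclass _ (hfX hz)),
      periodIndex_shiftZ hm hdisj (hclass z hz)]
    ring
  rcases (subApplyZ τ m '' XsubZ τ).eq_empty_or_nonempty with hempty | ⟨y₀, hy₀⟩
  · exact ⟨0, hm, by simp [hempty]⟩
  have hX0 : ∀ y ∈ subApplyZ τ m '' XsubZ τ, y ∈ XsubZ τ ∧ periodIndex τ m y = 0 := fun y hy =>
    ⟨mem_XsubZ_of_mem_periodClass hcover hm (mem_periodClass_zero hy),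
      periodIndex_eq_of_mem hdisj hm (mem_periodClass_zero hy)⟩
  refine ⟨_, (periodIndex_spec (hclass _ (hfX (hX0 y₀ hy₀).1))).1, fun y hy => ?_⟩
  have hGy : G y = G y₀ := hUR.eq_of_continuousOn_of_shiftZ_invariant
    (fun _ hx => shiftZk_mem_XsubZ hx) hGcont hGinv (hX0 y₀ hy₀).1 (hX0 y hy).1
  simp only [G, (hX0 y hy).2, (hX0 y₀ hy₀).2, Nat.cast_zero, sub_zero,
    ZMod.natCast_eq_natCast_iff'] at hGy
  have hfy := periodIndex_spec (hclass _ (hfX (hX0 y hy).1))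
  have hfy₀ := (periodIndex_spec (hclass _ (hfX (hX0 y₀ hy₀).1))).1
  rw [Nat.mod_eq_of_lt hfy.1, Nat.mod_eq_of_lt hfy₀] at hGy
  exact hGy ▸ hfy.2

/-- every block map on the two-sided subshift of a recognizable
injective uniform primitive aperiodic substitution maps `X⁰` into a single
period class `X^p`. -/
theorem stmt15 {A : Type*} [Fintype A] [DecidableEq A] [Inhabited A]
    [TopologicalSpace A] [DiscreteTopology A]
    (τ : A → List A) (m : ℕ) (hm : 0 < m)
    (huni : ∀ a : A, (τ a).length = m) (hinj : Function.Injective τ)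
    (hprim : Primitive τ)
    (haper : ∀ y ∈ XsubZ τ, ∀ p : ℕ, 0 < p → shiftZk (p : ℤ) y ≠ y)
    (hUR : URZ (XsubZ τ))
    (hcover : XsubZ τ = ⋃ p ∈ Finset.range m,
      shiftZk (p : ℤ) '' (subApplyZ τ m '' XsubZ τ))
    (hdisj : ∀ p < m, ∀ q < m, p ≠ q →
      Disjoint (shiftZk (p : ℤ) '' (subApplyZ τ m '' XsubZ τ))
        (shiftZk (q : ℤ) '' (subApplyZ τ m '' XsubZ τ)))
    -- recognizability: the block map `R`, marking exactly the cutting points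
    (R : (ℤ → A) → (ℤ → Option A))
    (hRcont : ContinuousOn R (XsubZ τ))
    (hRsh : ∀ x ∈ XsubZ τ, R (shiftZ x) = shiftZ (R x))
    (hR : ∀ p < m, ∀ y ∈ shiftZk (p : ℤ) '' (subApplyZ τ m '' XsubZ τ), ∀ i : ℤ,
      (R y i ≠ none ↔ (i - p) % (m : ℤ) = 0))
    (f : (ℤ → A) → (ℤ → A)) (hf : BlockMapZ (XsubZ τ) (XsubZ τ) f) :
    ∃ p < m, ∀ y ∈ subApplyZ τ m '' XsubZ τ,
      f y ∈ shiftZk (p : ℤ) '' (subApplyZ τ m '' XsubZ τ) :=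
  stmt15_general τ m hm hUR hcover hdisj R hRcont hR f hf
end

section
/- Let $\tau$ be the Thue–Morse substitution $0 \mapsto 01$, $1 \mapsto 10$ acting on its one-sided subshift $X_\tau$, and let $\tau^{-1}$ be its almost inverse dill map. Then for all $n \in \mathbb{N}$, $\tau^{-1} \circ \sigma^n \circ \tau = \sigma^{\lceil n/2 \rceil}$ as maps on $X_\tau$. -/
open Filter Topology

/-- The Thue–Morse substitution `0 ↦ 01`, `1 ↦ 10` (on `Bool`). -/
def tmSub : Bool → List Bool := fun b => [b, !b]

/-- The action of the Thue–Morse substitution on one-sided configurations. -/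
def tmApply (x : ℕ → Bool) : ℕ → Bool :=
  fun i => if i % 2 = 0 then x (i / 2) else !(x (i / 2))

/-- The implementation of the almost inverse of the Thue–Morse substitution:
it outputs the preimage letter at positions starting a `τ`-image, and `ε`
elsewhere (in-radius 4). -/
def tmInvImpl (x : ℕ → Bool) : List Bool :=
  if (x 0 = false ∧ x 1 = true ∧ x 2 = false ∧ x 3 = true ∧ x 4 = true) ∨
     (x 0 = false ∧ x 1 = true ∧ x 2 = true ∧ x 3 = false ∧ x 4 = false) ∨
     (x 0 = false ∧ x 1 = true ∧ x 2 = true ∧ x 3 = false ∧ x 4 = true) ∨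
     (x 0 = true ∧ x 1 = false ∧ x 2 = false ∧ x 3 = true ∧ x 4 = false) ∨
     (x 0 = true ∧ x 1 = false ∧ x 2 = false ∧ x 3 = true ∧ x 4 = true) ∨
     (x 0 = true ∧ x 1 = false ∧ x 2 = true ∧ x 3 = false ∧ x 4 = false)
  then [x 0] else []

/-!
On `τ(x)` the implementation `tmInvImpl` emits `x k` at the even position `2k`: the window there
is `x_k, ¬x_k, x_{k+1}, ¬x_{k+1}, x_{k+2}`, which is one of the six listed patterns exactly when
`x_k x_{k+1} x_{k+2}` is not a cube `aaa`, and Thue–Morse words contain no cubes. At odd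
positions the window `¬x_k, x_{k+1}, ¬x_{k+1}, x_{k+2}, ¬x_{k+2}` never matches, so nothing is
emitted. Together with `σ² ∘ τ = τ ∘ σ` this gives `τ⁻¹ (τ y) = y` and `τ⁻¹ (σ (τ y)) = σ y`
on `X_τ`, and the theorem follows by splitting on the parity of `n`.
-/

section Sequences

variable {A : Type*}

lemma shift_iterate_apply (y : ℕ → A) (m n : ℕ) : shift^[m] y n = y (m + n) := by
  induction m generalizing y with
  | zero => simp
  | succ m ih =>
    rw [Function.iterate_succ_apply, ih]
    exact congrArg y (by omega)

lemma ofFn_eq_map_range' (y : ℕ → A) (i l : ℕ) :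
    (List.ofFn fun k : Fin l => y (i + k)) = (List.range' i l).map y := by
  apply List.ext_getElem <;> simp

lemma range'_infix_range {i l N : ℕ} (h : i + l ≤ N) : List.range' i l <:+: List.range N := by
  obtain ⟨r, rfl⟩ := Nat.exists_eq_add_of_le h
  refine ⟨List.range i, List.range' (i + l) r, ?_⟩
  rw [List.append_assoc, List.range'_append_1, List.range_eq_range', List.range_eq_range']
  simpa [Nat.add_assoc] using List.range'_append_1 (s := 0) (m := i) (n := l + r)

end Sequences

section Language

variable {A : Type*} {τ : A → List A}

lemma InLanguage.mono {w v : List A} (h : w <:+: v) (hv : InLanguage τ v) : InLanguage τ w := by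
  obtain ⟨a, n, hn⟩ := hv
  exact ⟨a, n, h.trans hn⟩

lemma inLanguage_wordApply {w : List A} (h : InLanguage τ w) :
    InLanguage τ (wordApply τ w) := by
  obtain ⟨a, n, s, t, hst⟩ := h
  refine ⟨a, n + 1, wordApply τ s, wordApply τ t, ?_⟩
  simp [subPow, ← hst, wordApply]

lemma shift_mem_Xsub {x : ℕ → A} (hx : x ∈ Xsub τ) : shift x ∈ Xsub τ := by
  intro i l
  simpa [ofFn_eq_map_range', shift, List.range'_eq_map_range, Nat.add_right_comm]
    using hx (i + 1) l

lemma shift_iterate_mem_Xsub {x : ℕ → A} (hx : x ∈ Xsub τ) (m : ℕ) :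
    shift^[m] x ∈ Xsub τ := by
  induction m with
  | zero => exact hx
  | succ m ih => rw [Function.iterate_succ_apply']; exact shift_mem_Xsub ih

end Language

section Implementation

variable {A B : Type*} {X : Set (ℕ → A)} {Φ : (ℕ → A) → (ℕ → B)} {φ : (ℕ → A) → List B}
  {x : ℕ → A}

lemma IsImplementation.apply_of_lt (h : IsImplementation X Φ φ) (hx : x ∈ X) {n : ℕ}
    (hn : n < (φ x).length) : Φ x n = (φ x)[n] := by
  rw [h.2 x hx n, dif_pos hn, List.get_eq_getElem]

lemma IsImplementation.apply_length_add (h : IsImplementation X Φ φ) (hx : x ∈ X) (n : ℕ) :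
    Φ x ((φ x).length + n) = Φ (shift x) n := by
  rw [h.2 x hx, dif_neg (by omega), Nat.add_sub_cancel_left]

lemma IsImplementation.eq_shift_of_eq_nil (h : IsImplementation X Φ φ) (hx : x ∈ X)
    (hφ : φ x = []) : Φ x = Φ (shift x) :=
  funext fun n => by simpa [hφ] using h.apply_length_add hx n

end Implementation

section ThueMorse

lemma wordApply_tmSub_cons (b : Bool) (v : List Bool) :
    wordApply tmSub (b :: v) = b :: (!b) :: wordApply tmSub v := rfl

lemma wordApply_tmSub_map_range (x : ℕ → Bool) (m : ℕ) :
    wordApply tmSub ((List.range m).map x) = (List.range (2 * m)).map (tmApply x) := by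
  induction m with
  | zero => rfl
  | succ m ih =>
    rw [show 2 * (m + 1) = 2 * m + 1 + 1 by omega, List.range_succ, List.range_succ,
      List.range_succ]
    simp [wordApply, tmSub] at ih ⊢
    simp [ih, tmApply, Nat.mul_add_div]

lemma tmApply_mem_Xsub {x : ℕ → Bool} (hx : x ∈ Xsub tmSub) : tmApply x ∈ Xsub tmSub := by
  intro i l
  have hpre : InLanguage tmSub ((List.range (i + l)).map x) := by
    have := hx 0 (i + l)
    rwa [ofFn_eq_map_range', ← List.range_eq_range'] at this
  rw [ofFn_eq_map_range']
  refine InLanguage.mono ((range'_infix_range (N := 2 * (i + l)) (by omega)).map _) ?_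
  rw [← wordApply_tmSub_map_range]
  exact inLanguage_wordApply hpre

lemma shift_iterate_two_mul_tmApply (x : ℕ → Bool) (k : ℕ) :
    shift^[2 * k] (tmApply x) = tmApply (shift^[k] x) := by
  funext j
  simp only [shift_iterate_apply, tmApply, Nat.mul_add_mod, Nat.mul_add_div two_pos]

lemma not_cube_infix_wordApply_tmSub (a : Bool) (v : List Bool) :
    ¬ [a, a, a] <:+: wordApply tmSub v := by
  induction v with
  | nil => simp [wordApply]
  | cons b v ih =>
    rw [wordApply_tmSub_cons, List.infix_cons_iff, List.infix_cons_iff]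
    rintro (h | h | h)
    · cases a <;> cases b <;> simp at h
    · cases v with
      | nil => simpa [wordApply] using h.length_le
      | cons c v => cases a <;> cases c <;> simp [wordApply_tmSub_cons] at h
    · exact ih h

lemma not_cube_of_mem_Xsub_tmSub {x : ℕ → Bool} (hx : x ∈ Xsub tmSub) :
    ¬ (x 0 = x 1 ∧ x 1 = x 2) := by
  rintro ⟨h01, h12⟩
  obtain ⟨a, n, hinf⟩ := hx 0 3
  have hcube : (List.ofFn fun k : Fin 3 => x (0 + k)) = [x 0, x 0, x 0] := by
    simp [List.ofFn_succ, h01, h12]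
  rw [hcube] at hinf
  cases n with
  | zero => simpa [subPow] using hinf.length_le
  | succ n => exact not_cube_infix_wordApply_tmSub _ _ hinf

lemma tmInvImpl_tmApply {y : ℕ → Bool} (hy : ¬ (y 0 = y 1 ∧ y 1 = y 2)) :
    tmInvImpl (tmApply y) = [y 0] := by
  simp only [tmInvImpl, tmApply]
  revert hy
  cases y 0 <;> cases y 1 <;> cases y 2 <;> simp

lemma tmInvImpl_shift_tmApply (y : ℕ → Bool) : tmInvImpl (shift (tmApply y)) = [] := by
  simp only [tmInvImpl, shift, tmApply, Nat.reduceAdd, Nat.reduceMod, Nat.reduceDiv]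
  cases y 0 <;> cases y 1 <;> cases y 2 <;> simp

variable {Ψ : (ℕ → Bool) → (ℕ → Bool)}

lemma tmInv_shift_tmApply_eq_tmInv_tmApply_shift
    (himpl : IsImplementation (Xsub tmSub) Ψ tmInvImpl) {y : ℕ → Bool} (hy : y ∈ Xsub tmSub) :
    Ψ (shift (tmApply y)) = Ψ (tmApply (shift y)) := by
  rw [himpl.eq_shift_of_eq_nil (shift_mem_Xsub (tmApply_mem_Xsub hy)) (tmInvImpl_shift_tmApply y)]
  exact congrArg Ψ (shift_iterate_two_mul_tmApply y 1)

lemma tmInv_tmApply (himpl : IsImplementation (Xsub tmSub) Ψ tmInvImpl) {y : ℕ → Bool}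
    (hy : y ∈ Xsub tmSub) : Ψ (tmApply y) = y := by
  funext n
  induction n generalizing y with
  | zero =>
    simpa [tmInvImpl_tmApply (not_cube_of_mem_Xsub_tmSub hy)] using
      himpl.apply_of_lt (tmApply_mem_Xsub hy) (n := 0)
  | succ n ih =>
    have hlead := tmInvImpl_tmApply (not_cube_of_mem_Xsub_tmSub hy)
    calc Ψ (tmApply y) (n + 1)
        = Ψ (shift (tmApply y)) n := by
          simpa [hlead, Nat.add_comm] using himpl.apply_length_add (tmApply_mem_Xsub hy) n
      _ = Ψ (tmApply (shift y)) n := by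
          rw [tmInv_shift_tmApply_eq_tmInv_tmApply_shift himpl hy]
      _ = y (n + 1) := ih (shift_mem_Xsub hy)

lemma tmInv_shift_tmApply (himpl : IsImplementation (Xsub tmSub) Ψ tmInvImpl)
    {y : ℕ → Bool} (hy : y ∈ Xsub tmSub) :
    Ψ (shift (tmApply y)) = shift y := by
  rw [tmInv_shift_tmApply_eq_tmInv_tmApply_shift himpl hy,
    tmInv_tmApply himpl (shift_mem_Xsub hy)]

end ThueMorse

theorem stmt16_general (Ψ : (ℕ → Bool) → (ℕ → Bool))
    (himpl : IsImplementation (Xsub tmSub) Ψ tmInvImpl) :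
    ∀ n : ℕ, ∀ x ∈ Xsub tmSub,
      Ψ (shift^[n] (tmApply x)) = shift^[(n + 1) / 2] x := by
  intro n x hx
  have hk : ∀ k, shift^[k] x ∈ Xsub tmSub := shift_iterate_mem_Xsub hx
  obtain ⟨k, rfl | rfl⟩ := Nat.even_or_odd' n
  · rw [shift_iterate_two_mul_tmApply, tmInv_tmApply himpl (hk k)]
    congr 1
    omega
  · rw [Function.iterate_succ_apply', shift_iterate_two_mul_tmApply,
      tmInv_shift_tmApply himpl (hk k), ← Function.iterate_succ_apply' shift]
    congr 1
    omega

/-- for the Thue–Morse substitution `τ` and its almost inverse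
dill map `τ⁻¹`, we have `τ⁻¹ ∘ σⁿ ∘ τ = σ^⌈n/2⌉` on `X_τ`. -/
theorem stmt16 (Ψ : (ℕ → Bool) → (ℕ → Bool))
    (hdill : DillMap (Xsub tmSub) (Xsub tmSub) Ψ)
    (himpl : IsImplementation (Xsub tmSub) Ψ tmInvImpl) :
    ∀ n : ℕ, ∀ x ∈ Xsub tmSub,
      Ψ (shift^[n] (tmApply x)) = shift^[(n + 1) / 2] x :=
  stmt16_general Ψ himpl
end
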